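/- arXiv:2602.23233 — 9 statements merged into one kernel-verified Lean document; each statement's English description precedes it below -/
import Mathlib

section
/- Identification of stochastic-intervention estimands: Assume no unmeasured confounding, let (A*, π*) be a stochastic intervention, and assume positivity: P-a.s., for every b ∈ Fin m, π*(b|X) > 0 implies π(b|X) > 0. Then for every measurable set 𝒳' ⊆ 𝒳 and every subset 𝒜' ⊆ Fin m such that the event E = {X ∈ 𝒳'} ∩ {A ∈ 𝒜'} has P(E) > 0, one has E[f(X, A*, U) | E] = E[ Σ_{b ∈ Fin m} μ(b, X)·π*(b|X) | E ]. -/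
/-!
Split the outcome along the arms, `f(X, A*, U) = ∑ b, 1{A* = b} f(X, b, U)`. The event `E` and the
counterfactual `f(X, b, U)` are functions of `(X, A, U)`, so conditioning on `(X, A, U)` replaces
`1{A* = b}` by `π*(b | X)`. No unmeasured confounding gives the product rule
`𝔼[1{A ∈ s} g(X, U) | X] = P(A ∈ s | X) 𝔼[g(X, U) | X]`: the law of `(X, U)` restricted to
`{A ∈ s}` is the law of `(X, U)` reweighted by `P(A ∈ s | X)`, as one checks on rectangles.
With `s = {b}` the product rule identifies `μ(b, X)` with `𝔼[f(X, b, U) | X]` wherever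
`π(b | X) ≠ 0`, which by positivity covers the support of `π*(b | X)`; with `s = 𝒜'` it lets one
condition the event `{A ∈ 𝒜'}` out and back in.
-/

open MeasureTheory ProbabilityTheory

section

variable {Ω : Type*} {m mΩ : MeasurableSpace Ω} {μ : Measure Ω}

theorem setIntegral_mul_condExp (hm : m ≤ mΩ) [SigmaFinite (μ.trim hm)] {S : Set Ω}
    (hS : MeasurableSet[m] S) {φ ψ : Ω → ℝ} (hφ : StronglyMeasurable[m] φ)
    (hφψ : Integrable (φ * ψ) μ) (hψ : Integrable ψ μ) :
    ∫ ω in S, φ ω * μ[ψ|m] ω ∂μ = ∫ ω in S, φ ω * ψ ω ∂μ := by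
  refine Eq.trans ?_ (setIntegral_condExp hm hφψ hS)
  refine setIntegral_congr_ae (hm S hS) ?_
  filter_upwards [condExp_mul_of_stronglyMeasurable_left hφ hφψ hψ] with ω hω _
  exact hω.symm

theorem setIntegral_mul_condExp_indicator [IsFiniteMeasure μ] (hm : m ≤ mΩ) {S T : Set Ω}
    (hS : MeasurableSet[m] S) (hT : MeasurableSet T) {φ : Ω → ℝ} (hφ : StronglyMeasurable[m] φ)
    (hφi : Integrable φ μ) :
    ∫ ω in S, φ ω * (μ⟦T | m⟧) ω ∂μ = ∫ ω in S ∩ T, φ ω ∂μ := by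
  have hφT : φ * T.indicator (fun _ => 1) = T.indicator φ := by
    ext ω
    by_cases hω : ω ∈ T <;> simp [hω]
  rw [setIntegral_mul_condExp hm hS hφ (hφT ▸ hφi.indicator hT)
    ((integrable_const 1).indicator hT), ← setIntegral_indicator hT]
  simp_rw [← Pi.mul_apply, hφT]

theorem ae_abs_condExp_indicator_le_one [IsFiniteMeasure μ] (T : Set Ω) :
    ∀ᵐ ω ∂μ, |(μ⟦T | m⟧) ω| ≤ 1 := by
  refine ae_bdd_abs_condExp_of_ae_bdd_abs (ae_of_all _ fun ω => ?_)
  by_cases hω : ω ∈ T <;> simp [hω]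

theorem indicator_preimage_singleton_one_eq_ite {β : Type*} [DecidableEq β] (V : Ω → β) (b : β) :
    (V ⁻¹' {b}).indicator (fun _ => (1 : ℝ)) = fun ω => if V ω = b then 1 else 0 := by
  ext ω
  by_cases hω : V ω = b <;> simp [hω]

theorem condExp_indicator_nonneg (T : Set Ω) : 0 ≤ᵐ[μ] μ⟦T | m⟧ :=
  condExp_nonneg (ae_of_all _ fun ω => Set.indicator_nonneg (fun _ _ => zero_le_one) ω)

theorem setIntegral_eq_sum_inter_preimage_singleton {α : Type*} [Fintype α] [MeasurableSpace α]
    [MeasurableSingletonClass α] {a : Ω → α} (ha : Measurable a) {F : α → Ω → ℝ}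
    (hF : ∀ b, Integrable (F b) μ) (S : Set Ω) :
    ∫ ω in S, F (a ω) ω ∂μ = ∑ b, ∫ ω in S ∩ a ⁻¹' {b}, F b ω ∂μ := by
  have hab (b : α) : MeasurableSet (a ⁻¹' {b}) := ha (measurableSet_singleton b)
  calc ∫ ω in S, F (a ω) ω ∂μ = ∫ ω in S, ∑ b, (a ⁻¹' {b}).indicator (F b) ω ∂μ := by
        classical
        refine integral_congr_ae (ae_of_all _ fun ω => ?_)
        simp [Set.indicator_apply]
    _ = ∑ b, ∫ ω in S, (a ⁻¹' {b}).indicator (F b) ω ∂μ :=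
        integral_finsetSum _ fun b _ => ((hF b).indicator (hab b)).integrableOn
    _ = ∑ b, ∫ ω in S ∩ a ⁻¹' {b}, F b ω ∂μ := by
        simp_rw [setIntegral_indicator (hab _)]

theorem setIntegral_inter_preimage_singleton_eq_setIntegral_mul_of_intervention [IsFiniteMeasure μ]
    {𝒵 α : Type*} [MeasurableSpace 𝒵] [MeasurableSpace α] [MeasurableSingletonClass α]
    [DecidableEq α] {Z : Ω → 𝒵} (hZ : Measurable Z) {Astar : Ω → α} (hAstar : Measurable Astar)
    {b : α} {w : Ω → ℝ}
    (hw : w =ᵐ[μ] μ[fun ω => if Astar ω = b then (1 : ℝ) else 0 |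
      MeasurableSpace.comap Z inferInstance])
    {S : Set Ω} (hS : MeasurableSet[MeasurableSpace.comap Z inferInstance] S) {k : Ω → ℝ}
    (hk : StronglyMeasurable[MeasurableSpace.comap Z inferInstance] k) (hki : Integrable k μ) :
    ∫ ω in S ∩ Astar ⁻¹' {b}, k ω ∂μ = ∫ ω in S, k ω * w ω ∂μ := by
  rw [← setIntegral_mul_condExp_indicator hZ.comap_le hS (hAstar (measurableSet_singleton b)) hk
    hki, indicator_preimage_singleton_one_eq_ite]
  refine setIntegral_congr_ae (hZ.comap_le S hS) ?_
  filter_upwards [hw] with ω hω _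
  rw [hω]

end

namespace ProbabilityTheory

variable {Ω 𝒳 𝒰 α : Type*} {m' mΩ : MeasurableSpace Ω} [StandardBorelSpace Ω]
  [MeasurableSpace 𝒳] [MeasurableSpace 𝒰] [MeasurableSpace α]
  {P : Measure Ω} [IsFiniteMeasure P] {X : Ω → 𝒳} {U : Ω → 𝒰} {A : Ω → α}

theorem CondIndepFun.setIntegral_inter_preimage_condExp_indicator {hm' : m' ≤ mΩ}
    (hU : Measurable U) (hA : Measurable A) (hAU : CondIndepFun m' hm' A U P)
    {s : Set α} (hs : MeasurableSet s) {S : Set Ω} (hS : MeasurableSet[m'] S) {t : Set 𝒰}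
    (ht : MeasurableSet t) :
    ∫ ω in S ∩ U ⁻¹' t, (P⟦A ⁻¹' s | m'⟧) ω ∂P = P.real (S ∩ (A ⁻¹' s ∩ U ⁻¹' t)) := by
  have hAsUt : MeasurableSet (A ⁻¹' s ∩ U ⁻¹' t) := (hA hs).inter (hU ht)
  calc ∫ ω in S ∩ U ⁻¹' t, (P⟦A ⁻¹' s | m'⟧) ω ∂P
      = ∫ ω in S, (P⟦A ⁻¹' s | m'⟧) ω * (P⟦U ⁻¹' t | m'⟧) ω ∂P :=
        (setIntegral_mul_condExp_indicator hm' hS (hU ht) stronglyMeasurable_condExp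
          integrable_condExp).symm
    _ = ∫ ω in S, (P⟦A ⁻¹' s ∩ U ⁻¹' t | m'⟧) ω ∂P := by
        refine setIntegral_congr_ae (hm' S hS) ?_
        filter_upwards [(condIndepFun_iff_condExp_inter_preimage_eq_mul hA hU).1 hAU s t hs ht]
          with ω hω _ using hω.symm
    _ = P.real (S ∩ (A ⁻¹' s ∩ U ⁻¹' t)) := by
        rw [setIntegral_condExp hm' ((integrable_const (1 : ℝ)).indicator hAsUt) hS,
          setIntegral_indicator hAsUt, setIntegral_const, smul_eq_mul, mul_one]

theorem CondIndepFun.map_restrict_preimage_eq_map_withDensity {hm' : m' ≤ mΩ}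
    (hX : Measurable[m'] X) (hU : Measurable U) (hA : Measurable A)
    (hAU : CondIndepFun m' hm' A U P) {s : Set α} (hs : MeasurableSet s) :
    (P.restrict (A ⁻¹' s)).map (fun ω => (X ω, U ω))
      = (P.withDensity fun ω => ENNReal.ofReal ((P⟦A ⁻¹' s | m'⟧) ω)).map
          (fun ω => (X ω, U ω)) := by
  have hW : Measurable fun ω => (X ω, U ω) := (hX.mono hm' le_rfl).prodMk hU
  refine Measure.ext_prod_iff.2 fun {t₁ t₂} ht₁ ht₂ => ?_
  have hXU : MeasurableSet (X ⁻¹' t₁ ∩ U ⁻¹' t₂) := (hX.mono hm' le_rfl ht₁).inter (hU ht₂)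
  rw [Measure.map_apply hW (ht₁.prod ht₂), Measure.map_apply hW (ht₁.prod ht₂),
    Set.mk_preimage_prod, Measure.restrict_apply hXU, withDensity_apply _ hXU,
    ← ofReal_integral_eq_lintegral_ofReal integrable_condExp.integrableOn
      (ae_restrict_of_ae (condExp_indicator_nonneg _)),
    hAU.setIntegral_inter_preimage_condExp_indicator hU hA hs (hX ht₁) ht₂,
    measureReal_def, ENNReal.ofReal_toReal (measure_ne_top _ _), Set.inter_comm (A ⁻¹' s),
    ← Set.inter_assoc]

theorem CondIndepFun.setIntegral_inter_preimage_eq_setIntegral_condExp_mul {hm' : m' ≤ mΩ}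
    (hX : Measurable[m'] X) (hU : Measurable U) (hA : Measurable A)
    (hAU : CondIndepFun m' hm' A U P) {s : Set α} (hs : MeasurableSet s) {T : Set (𝒳 × 𝒰)}
    (hT : MeasurableSet T) {k : 𝒳 × 𝒰 → ℝ} (hk : Measurable k) :
    ∫ ω in (fun ω => (X ω, U ω)) ⁻¹' T ∩ A ⁻¹' s, k (X ω, U ω) ∂P
      = ∫ ω in (fun ω => (X ω, U ω)) ⁻¹' T, (P⟦A ⁻¹' s | m'⟧) ω * k (X ω, U ω) ∂P := by
  have hW : Measurable fun ω => (X ω, U ω) := (hX.mono hm' le_rfl).prodMk hU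
  have hp : Measurable fun ω => ENNReal.ofReal ((P⟦A ⁻¹' s | m'⟧) ω) :=
    (stronglyMeasurable_condExp.mono hm').measurable.ennreal_ofReal
  calc ∫ ω in (fun ω => (X ω, U ω)) ⁻¹' T ∩ A ⁻¹' s, k (X ω, U ω) ∂P
      = ∫ z in T, k z ∂(P.restrict (A ⁻¹' s)).map (fun ω => (X ω, U ω)) := by
        rw [setIntegral_map hT hk.aestronglyMeasurable hW.aemeasurable,
          Measure.restrict_restrict (hW hT)]
    _ = ∫ z in T, k z ∂(P.withDensity fun ω => ENNReal.ofReal ((P⟦A ⁻¹' s | m'⟧) ω)).map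
          (fun ω => (X ω, U ω)) := by
        rw [hAU.map_restrict_preimage_eq_map_withDensity hX hU hA hs]
    _ = ∫ ω in (fun ω => (X ω, U ω)) ⁻¹' T, (P⟦A ⁻¹' s | m'⟧) ω * k (X ω, U ω) ∂P := by
        rw [setIntegral_map hT hk.aestronglyMeasurable hW.aemeasurable,
          restrict_withDensity (hW hT), integral_withDensity_eq_integral_toReal_smul hp
            (ae_of_all _ fun _ => ENNReal.ofReal_lt_top)]
        refine integral_congr_ae ?_
        filter_upwards [ae_restrict_of_ae (condExp_indicator_nonneg (A ⁻¹' s))] with ω hω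
        rw [ENNReal.toReal_ofReal hω, smul_eq_mul]

theorem CondIndepFun.condExp_indicator_ae_eq_mul (hX : Measurable X) (hU : Measurable U)
    (hA : Measurable A)
    (hAU : CondIndepFun (MeasurableSpace.comap X inferInstance) hX.comap_le A U P)
    {s : Set α} (hs : MeasurableSet s) {h : 𝒳 × 𝒰 → ℝ} (hh : Measurable h)
    (hint : Integrable (fun ω => h (X ω, U ω)) P) :
    P[(A ⁻¹' s).indicator (fun ω => h (X ω, U ω)) | MeasurableSpace.comap X inferInstance]
      =ᵐ[P] P⟦A ⁻¹' s | MeasurableSpace.comap X inferInstance⟧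
        * P[fun ω => h (X ω, U ω) | MeasurableSpace.comap X inferInstance] := by
  have hp_mul {g : Ω → ℝ} (hg : Integrable g P) :
      Integrable (fun ω => (P⟦A ⁻¹' s | MeasurableSpace.comap X inferInstance⟧) ω * g ω) P :=
    hg.bdd_mul (stronglyMeasurable_condExp.mono hX.comap_le).aestronglyMeasurable
      (by simpa using ae_abs_condExp_indicator_le_one (A ⁻¹' s))
  refine (ae_eq_condExp_of_forall_setIntegral_eq hX.comap_le (hint.indicator (hA hs))
    (fun _ _ _ => (hp_mul integrable_condExp).integrableOn) ?_
    (stronglyMeasurable_condExp.mul stronglyMeasurable_condExp).aestronglyMeasurable).symm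
  rintro _ ⟨t, ht, rfl⟩ -
  have hpre : (fun ω => (X ω, U ω)) ⁻¹' (t ×ˢ Set.univ) = X ⁻¹' t := by
    ext ω
    simp
  calc ∫ ω in X ⁻¹' t, (P⟦A ⁻¹' s | MeasurableSpace.comap X inferInstance⟧
          * P[fun ω => h (X ω, U ω) | MeasurableSpace.comap X inferInstance]) ω ∂P
      = ∫ ω in X ⁻¹' t, (P⟦A ⁻¹' s | MeasurableSpace.comap X inferInstance⟧) ω
          * h (X ω, U ω) ∂P :=
        setIntegral_mul_condExp hX.comap_le ⟨t, ht, rfl⟩ stronglyMeasurable_condExp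
          (hp_mul hint) hint
    _ = ∫ ω in X ⁻¹' t ∩ A ⁻¹' s, h (X ω, U ω) ∂P := by
        rw [← hpre]
        exact (hAU.setIntegral_inter_preimage_eq_setIntegral_condExp_mul (comap_measurable X)
          hU hA hs (ht.prod MeasurableSet.univ) hh).symm
    _ = ∫ ω in X ⁻¹' t, (A ⁻¹' s).indicator (fun ω => h (X ω, U ω)) ω ∂P :=
        (setIntegral_indicator (hA hs)).symm

section Identification

variable [DecidableEq α] {f : 𝒳 → α → 𝒰 → ℝ} {b : α}

theorem CondIndepFun.ae_eq_condExp_of_regression (hX : Measurable X) (hU : Measurable U)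
    (hA : Measurable A)
    (hAU : CondIndepFun (MeasurableSpace.comap X inferInstance) hX.comap_le A U P)
    [MeasurableSingletonClass α] (hf_b : Measurable fun z : 𝒳 × 𝒰 => f z.1 b z.2)
    (hint : Integrable (fun ω => f (X ω) b (U ω)) P) {ρ ν : 𝒳 → ℝ}
    (hρ : (fun ω => ρ (X ω)) =ᵐ[P]
      P[fun ω => if A ω = b then (1 : ℝ) else 0 | MeasurableSpace.comap X inferInstance])
    (hν : (fun ω => ν (X ω) * ρ (X ω)) =ᵐ[P]
      P[fun ω => (if A ω = b then (1 : ℝ) else 0) * f (X ω) (A ω) (U ω) |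
        MeasurableSpace.comap X inferInstance]) :
    ∀ᵐ ω ∂P, ρ (X ω) ≠ 0 →
      ν (X ω) = P[fun ω => f (X ω) b (U ω) | MeasurableSpace.comap X inferInstance] ω := by
  have hAb : (fun ω => (if A ω = b then (1 : ℝ) else 0) * f (X ω) (A ω) (U ω))
      = (A ⁻¹' {b}).indicator (fun ω => f (X ω) b (U ω)) := by
    ext ω
    by_cases hω : A ω = b <;> simp [hω]
  rw [← indicator_preimage_singleton_one_eq_ite] at hρ
  rw [hAb] at hν
  filter_upwards [hρ, hν,
    hAU.condExp_indicator_ae_eq_mul hX hU hA (measurableSet_singleton b) hf_b hint]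
    with ω hρω hνω hω hne
  rw [hω, Pi.mul_apply, ← hρω, mul_comm] at hνω
  exact mul_left_cancel₀ hne hνω

theorem CondIndepFun.setIntegral_inter_preimage_mul_eq_of_regression (hX : Measurable X)
    (hU : Measurable U) (hA : Measurable A)
    (hAU : CondIndepFun (MeasurableSpace.comap X inferInstance) hX.comap_le A U P)
    [MeasurableSingletonClass α] (hf_b : Measurable fun z : 𝒳 × 𝒰 => f z.1 b z.2)
    (hint : Integrable (fun ω => f (X ω) b (U ω)) P) {ρ ν w : 𝒳 → ℝ}
    (hν_meas : Measurable ν) (hw_meas : Measurable w)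
    (hfw : Integrable (fun ω => f (X ω) b (U ω) * w (X ω)) P)
    (hνw : Integrable (fun ω => ν (X ω) * w (X ω)) P)
    (hρ : (fun ω => ρ (X ω)) =ᵐ[P]
      P[fun ω => if A ω = b then (1 : ℝ) else 0 | MeasurableSpace.comap X inferInstance])
    (hν : (fun ω => ν (X ω) * ρ (X ω)) =ᵐ[P]
      P[fun ω => (if A ω = b then (1 : ℝ) else 0) * f (X ω) (A ω) (U ω) |
        MeasurableSpace.comap X inferInstance])
    (hpos : ∀ᵐ ω ∂P, w (X ω) ≠ 0 → ρ (X ω) ≠ 0)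
    {S : Set Ω} (hS : MeasurableSet[MeasurableSpace.comap X inferInstance] S)
    {s : Set α} (hs : MeasurableSet s) :
    ∫ ω in S ∩ A ⁻¹' s, f (X ω) b (U ω) * w (X ω) ∂P
      = ∫ ω in S ∩ A ⁻¹' s, ν (X ω) * w (X ω) ∂P := by
  have hwX : StronglyMeasurable[MeasurableSpace.comap X inferInstance] fun ω => w (X ω) :=
    (hw_meas.comp (comap_measurable X)).stronglyMeasurable
  have hνX : StronglyMeasurable[MeasurableSpace.comap X inferInstance] fun ω => ν (X ω) :=
    (hν_meas.comp (comap_measurable X)).stronglyMeasurable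
  have hfw_s : Integrable
      (fun ω => w (X ω) * (A ⁻¹' s).indicator (fun ω => f (X ω) b (U ω)) ω) P := by
    refine (hfw.indicator (hA hs)).congr (ae_of_all _ fun ω => ?_)
    rw [Set.indicator_mul_left, mul_comm]
  calc ∫ ω in S ∩ A ⁻¹' s, f (X ω) b (U ω) * w (X ω) ∂P
      = ∫ ω in S, w (X ω) * (A ⁻¹' s).indicator (fun ω => f (X ω) b (U ω)) ω ∂P := by
        rw [← setIntegral_indicator (hA hs)]
        congr 1
        ext ω
        rw [Set.indicator_mul_left, mul_comm]
    _ = ∫ ω in S, w (X ω) * (P[(A ⁻¹' s).indicator (fun ω => f (X ω) b (U ω)) |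
          MeasurableSpace.comap X inferInstance]) ω ∂P :=
        (setIntegral_mul_condExp hX.comap_le hS hwX hfw_s (hint.indicator (hA hs))).symm
    _ = ∫ ω in S, (ν (X ω) * w (X ω)) * (P⟦A ⁻¹' s | MeasurableSpace.comap X inferInstance⟧) ω
          ∂P := by
        refine setIntegral_congr_ae (hX.comap_le S hS) ?_
        filter_upwards [hAU.condExp_indicator_ae_eq_mul hX hU hA hs hf_b hint,
          hAU.ae_eq_condExp_of_regression hX hU hA hf_b hint hρ hν, hpos]
          with ω hprod hreg hpos _
        rw [hprod, Pi.mul_apply]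
        by_cases hw0 : w (X ω) = 0
        · simp [hw0]
        · rw [hreg (hpos hw0)]
          ring
    _ = ∫ ω in S ∩ A ⁻¹' s, ν (X ω) * w (X ω) ∂P :=
        setIntegral_mul_condExp_indicator (φ := fun ω => ν (X ω) * w (X ω)) hX.comap_le
          hS (hA hs) (hνX.mul hwX) hνw

end Identification

end ProbabilityTheory

open ProbabilityTheory in
theorem identification_stochastic_intervention_general
    {Ω 𝒳 𝒰 : Type*} [MeasurableSpace Ω] [StandardBorelSpace Ω]
    [MeasurableSpace 𝒳] [MeasurableSpace 𝒰]
    (P : Measure Ω) [IsProbabilityMeasure P]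
    (m : ℕ)
    (X : Ω → 𝒳) (U : Ω → 𝒰) (A : Ω → Fin m)
    (hX : Measurable X) (hU : Measurable U) (hA : Measurable A)
    (f : 𝒳 → Fin m → 𝒰 → ℝ)
    (hf : Measurable fun p : 𝒳 × Fin m × 𝒰 => f p.1 p.2.1 p.2.2)
    (C : ℝ) (hfbdd : ∀ x b u, |f x b u| ≤ C)
    -- propensity scores: π(b|X) is a version of E[1{A=b} | σ(X)]
    (π : Fin m → 𝒳 → ℝ)
    (hπ : ∀ b, (fun ω => π b (X ω)) =ᵐ[P]
      P[fun ω => (if A ω = b then (1 : ℝ) else 0) | MeasurableSpace.comap X inferInstance])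
    -- outcome regression: μ(b,X)·π(b|X) is a version of E[1{A=b}·Y | σ(X)]
    (μreg : Fin m → 𝒳 → ℝ) (hμmeas : ∀ b, Measurable (μreg b))
    (Cμ : ℝ) (hμbdd : ∀ b x, |μreg b x| ≤ Cμ)
    (hμ : ∀ b, (fun ω => μreg b (X ω) * π b (X ω)) =ᵐ[P]
      P[fun ω => (if A ω = b then (1 : ℝ) else 0) * f (X ω) (A ω) (U ω) |
        MeasurableSpace.comap X inferInstance])
    -- no unmeasured confounding: A ⫫ U | σ(X)
    (hNUC : CondIndepFun (MeasurableSpace.comap X inferInstance) hX.comap_le A U P)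
    -- stochastic intervention (A*, π*)
    (Astar : Ω → Fin m) (hAstar : Measurable Astar)
    (πstar : Fin m → 𝒳 → ℝ) (hπstarmeas : ∀ b, Measurable (πstar b))
    (hπstar01 : ∀ b x, 0 ≤ πstar b x ∧ πstar b x ≤ 1)
    (hπstar : ∀ b, (fun ω => πstar b (X ω)) =ᵐ[P]
      P[fun ω => (if Astar ω = b then (1 : ℝ) else 0) |
        MeasurableSpace.comap (fun ω => (X ω, A ω, U ω)) inferInstance])
    -- positivity
    (hpos : ∀ᵐ ω ∂P, ∀ b : Fin m, 0 < πstar b (X ω) → 0 < π b (X ω))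
    -- reference population
    (𝒳' : Set 𝒳) (h𝒳' : MeasurableSet 𝒳') (𝒜' : Set (Fin m))
    (E : Set Ω) (hE : E = {ω | X ω ∈ 𝒳'} ∩ {ω | A ω ∈ 𝒜'}) :
    (∫ ω in E, f (X ω) (Astar ω) (U ω) ∂P) / (P E).toReal
      = (∫ ω in E, ∑ b : Fin m, μreg b (X ω) * πstar b (X ω) ∂P) / (P E).toReal := by
  congr 1
  have hf_b (b : Fin m) : Measurable fun z : 𝒳 × 𝒰 => f z.1 b z.2 :=
    hf.comp (measurable_fst.prodMk (measurable_const.prodMk measurable_snd))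
  have hf_int (b : Fin m) : Integrable (fun ω => f (X ω) b (U ω)) P :=
    .of_bound ((hf_b b).comp (hX.prodMk hU)).aestronglyMeasurable C
      (ae_of_all _ fun ω => (Real.norm_eq_abs _).trans_le (hfbdd _ _ _))
  have hμ_int (b : Fin m) : Integrable (fun ω => μreg b (X ω)) P :=
    .of_bound ((hμmeas b).comp hX).aestronglyMeasurable Cμ
      (ae_of_all _ fun ω => (Real.norm_eq_abs _).trans_le (hμbdd b _))
  have hπstar_int (b : Fin m) {g : Ω → ℝ} (hg : Integrable g P) :
      Integrable (fun ω => g ω * πstar b (X ω)) P :=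
    hg.mul_bdd ((hπstarmeas b).comp hX).aestronglyMeasurable (ae_of_all _ fun ω =>
      abs_le.2 ⟨by linarith [(hπstar01 b (X ω)).1], (hπstar01 b (X ω)).2⟩)
  have hE_XAU : MeasurableSet[MeasurableSpace.comap (fun ω => (X ω, A ω, U ω)) inferInstance] E :=
    ⟨𝒳' ×ˢ 𝒜' ×ˢ Set.univ, h𝒳'.prod (𝒜'.to_countable.measurableSet.prod .univ), by
      rw [hE]
      ext ω
      simp⟩
  calc ∫ ω in E, f (X ω) (Astar ω) (U ω) ∂P
      = ∑ b, ∫ ω in E ∩ Astar ⁻¹' {b}, f (X ω) b (U ω) ∂P :=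
        setIntegral_eq_sum_inter_preimage_singleton hAstar hf_int E
    _ = ∑ b, ∫ ω in E, f (X ω) b (U ω) * πstar b (X ω) ∂P :=
        Finset.sum_congr rfl fun b _ =>
          setIntegral_inter_preimage_singleton_eq_setIntegral_mul_of_intervention
            (hX.prodMk (hA.prodMk hU)) hAstar (hπstar b) hE_XAU
            (((hf_b b).comp (measurable_fst.prodMk measurable_snd.snd)).comp
              (comap_measurable _)).stronglyMeasurable (hf_int b)
    _ = ∑ b, ∫ ω in E, μreg b (X ω) * πstar b (X ω) ∂P := by
        refine Finset.sum_congr rfl fun b _ => ?_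
        rw [hE]
        refine hNUC.setIntegral_inter_preimage_mul_eq_of_regression hX hU hA (hf_b b) (hf_int b)
          (hμmeas b) (hπstarmeas b) (hπstar_int b (hf_int b)) (hπstar_int b (hμ_int b)) (hπ b)
          (hμ b) ?_ ⟨𝒳', h𝒳', rfl⟩ 𝒜'.to_countable.measurableSet
        filter_upwards [hpos] with ω hω hne
        exact (hω b ((hπstar01 b _).1.lt_of_ne' hne)).ne'
    _ = ∫ ω in E, ∑ b, μreg b (X ω) * πstar b (X ω) ∂P :=
        (integral_finsetSum _ fun b _ => (hπstar_int b (hμ_int b)).integrableOn).symm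

/-- Identification of stochastic-intervention estimands. -/
theorem identification_stochastic_intervention
    {Ω 𝒳 𝒰 : Type*} [MeasurableSpace Ω] [StandardBorelSpace Ω]
    [MeasurableSpace 𝒳] [StandardBorelSpace 𝒳]
    [MeasurableSpace 𝒰] [StandardBorelSpace 𝒰]
    (P : Measure Ω) [IsProbabilityMeasure P]
    (m : ℕ) (hm : 1 ≤ m)
    (X : Ω → 𝒳) (U : Ω → 𝒰) (A : Ω → Fin m)
    (hX : Measurable X) (hU : Measurable U) (hA : Measurable A)
    (f : 𝒳 → Fin m → 𝒰 → ℝ)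
    (hf : Measurable fun p : 𝒳 × Fin m × 𝒰 => f p.1 p.2.1 p.2.2)
    (C : ℝ) (hfbdd : ∀ x b u, |f x b u| ≤ C)
    -- propensity scores: π(b|X) is a version of E[1{A=b} | σ(X)]
    (π : Fin m → 𝒳 → ℝ) (hπmeas : ∀ b, Measurable (π b))
    (hπ01 : ∀ b x, 0 ≤ π b x ∧ π b x ≤ 1)
    (hπ : ∀ b, (fun ω => π b (X ω)) =ᵐ[P]
      P[fun ω => (if A ω = b then (1 : ℝ) else 0) | MeasurableSpace.comap X inferInstance])
    -- outcome regression: μ(b,X)·π(b|X) is a version of E[1{A=b}·Y | σ(X)]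
    (μreg : Fin m → 𝒳 → ℝ) (hμmeas : ∀ b, Measurable (μreg b))
    (Cμ : ℝ) (hμbdd : ∀ b x, |μreg b x| ≤ Cμ)
    (hμ : ∀ b, (fun ω => μreg b (X ω) * π b (X ω)) =ᵐ[P]
      P[fun ω => (if A ω = b then (1 : ℝ) else 0) * f (X ω) (A ω) (U ω) |
        MeasurableSpace.comap X inferInstance])
    -- no unmeasured confounding: A ⫫ U | σ(X)
    (hNUC : CondIndepFun (MeasurableSpace.comap X inferInstance) hX.comap_le A U P)
    -- stochastic intervention (A*, π*)
    (Astar : Ω → Fin m) (hAstar : Measurable Astar)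
    (πstar : Fin m → 𝒳 → ℝ) (hπstarmeas : ∀ b, Measurable (πstar b))
    (hπstar01 : ∀ b x, 0 ≤ πstar b x ∧ πstar b x ≤ 1)
    (hπstar : ∀ b, (fun ω => πstar b (X ω)) =ᵐ[P]
      P[fun ω => (if Astar ω = b then (1 : ℝ) else 0) |
        MeasurableSpace.comap (fun ω => (X ω, A ω, U ω)) inferInstance])
    -- positivity
    (hpos : ∀ᵐ ω ∂P, ∀ b : Fin m, 0 < πstar b (X ω) → 0 < π b (X ω))
    -- reference population
    (𝒳' : Set 𝒳) (h𝒳' : MeasurableSet 𝒳') (𝒜' : Set (Fin m))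
    (E : Set Ω) (hE : E = {ω | X ω ∈ 𝒳'} ∩ {ω | A ω ∈ 𝒜'})
    (hPE : 0 < P E) :
    (∫ ω in E, f (X ω) (Astar ω) (U ω) ∂P) / (P E).toReal
      = (∫ ω in E, ∑ b : Fin m, μreg b (X ω) * πstar b (X ω) ∂P) / (P E).toReal :=
  identification_stochastic_intervention_general P m X U A hX hU hA f hf C hfbdd π hπ μreg hμmeas Cμ
    hμbdd hμ hNUC Astar hAstar πstar hπstarmeas hπstar01 hπstar hpos 𝒳' h𝒳' 𝒜' E hE
end

section
/- Identification of the indirect standardization parameter: Assume no unmeasured confounding. Let (A*, π*) be a stochastic intervention with π*(b|·) = π(b|·) for every b ∈ Fin m (attempts are randomly reassigned according to the observed propensity of players given covariates). Let m_P : 𝒳 → ℝ be measurable with m_P(X) P-a.s. equal to E[Y | σ(X)]. Fix a ∈ Fin m and a measurable set 𝒳' ⊆ 𝒳 with P(A = a, X ∈ 𝒳') > 0. Then E[f(X, A*, U) | A = a, X ∈ 𝒳'] = E[m_P(X) | A = a, X ∈ 𝒳']. -/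
/-!
Both integrals over `E` equal `∑ b, E[π(a|X) π(b|X) f(X, b, U); X ∈ 𝒳']`. Since the law of `A*`
given `(X, A, U)` is `π(·|X)`, the intervention side is `∑ b, E[π(b|X) f(X, b, U); A = a, X ∈ 𝒳']`.
No unmeasured confounding makes `π(c|X)` the conditional probability of `{A = c}` given `(X, U)`,
not only given `X`; so in an integral of a function of `(X, U)` the event `{A = c}` may be traded
for the weight `π(c|X)`. On the standardization side this turns `E[m_P(X); A = a, X ∈ 𝒳']` into
`E[π(a|X) m_P(X); X ∈ 𝒳'] = E[π(a|X) Y; X ∈ 𝒳']`, and splitting `Y` along the values `b` of `A`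
and trading `{A = b}` for `π(b|X)` gives the same sum.
-/

open MeasureTheory ProbabilityTheory

theorem indicator_preimage_singleton_one {Ω ι : Type*} [DecidableEq ι] (A : Ω → ι) (b : ι) :
    (A ⁻¹' {b}).indicator (fun _ ↦ (1 : ℝ)) = fun ω ↦ if A ω = b then 1 else 0 := by
  ext ω; by_cases h : A ω = b <;> simp [h]

theorem condExp_indicator_one_nonneg {Ω : Type*} {m m₀ : MeasurableSpace Ω} {μ : Measure Ω}
    (s : Set Ω) : 0 ≤ᵐ[μ] μ⟦s | m⟧ :=
  condExp_nonneg (.of_forall fun _ ↦ Set.indicator_nonneg (fun _ _ ↦ zero_le_one) _)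

theorem setIntegral_mul_condExp_s2 {Ω : Type*} {m m₀ : MeasurableSpace Ω} {μ : Measure Ω}
    (hm : m ≤ m₀) [SigmaFinite (μ.trim hm)] {g w : Ω → ℝ} (hg : StronglyMeasurable[m] g)
    (hgw : Integrable (fun ω ↦ g ω * w ω) μ) (hw : Integrable w μ) {E : Set Ω}
    (hE : MeasurableSet[m] E) :
    ∫ ω in E, g ω * μ[w | m] ω ∂μ = ∫ ω in E, g ω * w ω ∂μ := by
  rw [← setIntegral_condExp hm hgw hE]
  refine setIntegral_congr_ae (hm E hE) ?_
  filter_upwards [condExp_mul_of_stronglyMeasurable_left hg hgw hw] with ω h _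
  exact h.symm

theorem integral_comp_eq_sum_setIntegral_preimage {Ω ι E : Type*} [MeasurableSpace Ω]
    {μ : Measure Ω} [NormedAddCommGroup E] [NormedSpace ℝ E] [Fintype ι] [MeasurableSpace ι]
    [MeasurableSingletonClass ι] {A : Ω → ι} (hA : Measurable A) {F : ι → Ω → E}
    (hF : ∀ b, Integrable (F b) μ) :
    ∫ ω, F (A ω) ω ∂μ = ∑ b, ∫ ω in A ⁻¹' {b}, F b ω ∂μ := by
  simp_rw [← integral_indicator (hA (measurableSet_singleton _))]
  rw [← integral_finsetSum _ fun b _ ↦ (hF b).indicator (hA (measurableSet_singleton b))]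
  congr 1 with ω
  rw [Finset.sum_eq_single_of_mem (f := fun b ↦ (A ⁻¹' {b}).indicator (F b) ω) (A ω)
    (Finset.mem_univ _) fun b _ hb ↦ Set.indicator_of_notMem (s := A ⁻¹' {b}) (Ne.symm hb) _]
  exact (Set.indicator_of_mem (s := A ⁻¹' {A ω}) rfl (F (A ω))).symm

theorem setIntegral_comp_eq_sum_mul_of_condExp {Ω ι : Type*} {m m₀ : MeasurableSpace Ω}
    (hm : m ≤ m₀) {μ : Measure Ω} [IsFiniteMeasure μ] [Fintype ι] [DecidableEq ι]
    [MeasurableSpace ι] [MeasurableSingletonClass ι] {A : Ω → ι} (hA : Measurable A)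
    {g q : ι → Ω → ℝ} (hg : ∀ b, StronglyMeasurable[m] (g b)) (hgi : ∀ b, Integrable (g b) μ)
    (hq : ∀ b, q b =ᵐ[μ] μ[fun ω ↦ if A ω = b then 1 else 0 | m]) {E : Set Ω}
    (hE : MeasurableSet[m] E) :
    ∫ ω in E, g (A ω) ω ∂μ = ∑ b, ∫ ω in E, q b ω * g b ω ∂μ := by
  rw [integral_comp_eq_sum_setIntegral_preimage hA fun b ↦ (hgi b).restrict]
  refine Finset.sum_congr rfl fun b _ ↦ ?_
  have hAb : MeasurableSet (A ⁻¹' {b}) := hA (measurableSet_singleton b)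
  set w : Ω → ℝ := fun ω ↦ if A ω = b then 1 else 0
  have hgw_eq : (fun ω ↦ g b ω * w ω) = (A ⁻¹' {b}).indicator (g b) := by
    ext ω; by_cases h : A ω = b <;> simp [w, h]
  have hw_eq : w = (A ⁻¹' {b}).indicator 1 := by
    ext ω; by_cases h : A ω = b <;> simp [w, h]
  have hw : Integrable w μ := hw_eq ▸ (integrable_const 1).indicator hAb
  have hgw : Integrable (fun ω ↦ g b ω * w ω) μ := hgw_eq ▸ (hgi b).indicator hAb
  calc ∫ ω in A ⁻¹' {b}, g b ω ∂μ.restrict E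
      = ∫ ω in E, g b ω * w ω ∂μ := by
        rw [Measure.restrict_restrict hAb, Set.inter_comm, ← setIntegral_indicator hAb, hgw_eq]
    _ = ∫ ω in E, g b ω * μ[w | m] ω ∂μ := (setIntegral_mul_condExp_s2 hm (hg b) hgw hw hE).symm
    _ = ∫ ω in E, q b ω * g b ω ∂μ := by
        refine setIntegral_congr_ae (hm E hE) ?_
        filter_upwards [hq b] with ω h _
        rw [h, mul_comm]

section CondIndep

variable {Ω β γ : Type*} {m' mΩ : MeasurableSpace Ω} [StandardBorelSpace Ω]
  [MeasurableSpace β] [MeasurableSpace γ] {P : Measure Ω} [IsFiniteMeasure P] {hm' : m' ≤ mΩ}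
  {A : Ω → β} {U : Ω → γ}

theorem ProbabilityTheory.CondIndepFun.measureReal_inter_preimage_eq_setIntegral
    (hAU : CondIndepFun m' hm' A U P) (hA : Measurable A) (hU : Measurable U)
    {B : Set β} (hB : MeasurableSet B) {p : Ω → ℝ} (hpm : StronglyMeasurable[m'] p)
    (hp : p =ᵐ[P] P⟦A ⁻¹' B | m'⟧) {S : Set Ω} (hS : MeasurableSet[m'] S)
    {t : Set γ} (ht : MeasurableSet t) :
    P.real (S ∩ U ⁻¹' t ∩ A ⁻¹' B) = ∫ ω in S ∩ U ⁻¹' t, p ω ∂P := by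
  have hAB : MeasurableSet (A ⁻¹' B) := hA hB
  have hUt : MeasurableSet (U ⁻¹' t) := hU ht
  set w : Ω → ℝ := (U ⁻¹' t).indicator fun _ ↦ 1
  have hw : Integrable w P := (integrable_const 1).indicator hUt
  have hpw_eq : (fun ω ↦ p ω * w ω) = (U ⁻¹' t).indicator p := by
    ext ω; by_cases h : ω ∈ U ⁻¹' t <;> simp [w, h]
  have hpw : Integrable (fun ω ↦ p ω * w ω) P := by
    rw [hpw_eq]; exact (integrable_condExp.congr hp.symm).indicator hUt
  have hfactor := (condIndepFun_iff_condExp_inter_preimage_eq_mul hA hU).mp hAU B t hB ht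
  calc P.real (S ∩ U ⁻¹' t ∩ A ⁻¹' B)
      = ∫ ω in S, (P⟦A ⁻¹' B ∩ U ⁻¹' t | m'⟧) ω ∂P := by
        rw [setIntegral_condExp hm' ((integrable_const 1).indicator (hAB.inter hUt)) hS,
          setIntegral_indicator (hAB.inter hUt)]
        simp [Set.inter_assoc, Set.inter_comm (U ⁻¹' t)]
    _ = ∫ ω in S, p ω * P[w | m'] ω ∂P := by
        refine setIntegral_congr_ae (hm' S hS) ?_
        filter_upwards [hfactor, hp] with ω h1 h2 _
        rw [h1, h2]
    _ = ∫ ω in S ∩ U ⁻¹' t, p ω ∂P := by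
        rw [setIntegral_mul_condExp_s2 hm' hpm hpw hw hS, hpw_eq, setIntegral_indicator hUt]

end CondIndep

section Propensity

variable {Ω 𝒳 β γ : Type*} {mΩ : MeasurableSpace Ω} [StandardBorelSpace Ω]
  [MeasurableSpace 𝒳] [MeasurableSpace β] [MeasurableSpace γ] {P : Measure Ω} [IsFiniteMeasure P]
  {X : Ω → 𝒳} {A : Ω → β} {U : Ω → γ} {B : Set β} {π : 𝒳 → ℝ}

theorem map_restrict_preimage_eq_map_withDensity (hX : Measurable X) (hA : Measurable A)
    (hU : Measurable U)
    (hAU : CondIndepFun (MeasurableSpace.comap X inferInstance) hX.comap_le A U P)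
    (hB : MeasurableSet B) (hπm : Measurable π)
    (hπ : (fun ω ↦ π (X ω)) =ᵐ[P] P⟦A ⁻¹' B | MeasurableSpace.comap X inferInstance⟧) :
    (P.restrict (A ⁻¹' B)).map (fun ω ↦ (X ω, U ω))
      = (P.withDensity fun ω ↦ ENNReal.ofReal (π (X ω))).map (fun ω ↦ (X ω, U ω)) := by
  have hXU : Measurable fun ω ↦ (X ω, U ω) := hX.prodMk hU
  have hπ_int : Integrable (fun ω ↦ π (X ω)) P := integrable_condExp.congr hπ.symm
  have hπ_nonneg : 0 ≤ᵐ[P] fun ω ↦ π (X ω) := (condExp_indicator_one_nonneg _).trans_eq hπ.symm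
  refine Measure.ext_prod fun {s t} hs ht ↦ ?_
  have hst : MeasurableSet (X ⁻¹' s ∩ U ⁻¹' t) := (hX hs).inter (hU ht)
  rw [Measure.map_apply hXU (hs.prod ht), Measure.map_apply hXU (hs.prod ht),
    Set.mk_preimage_prod, Measure.restrict_apply hst, withDensity_apply _ hst,
    ← ofReal_integral_eq_lintegral_ofReal hπ_int.integrableOn (ae_restrict_of_ae hπ_nonneg),
    ← hAU.measureReal_inter_preimage_eq_setIntegral hA hU hB (p := fun ω ↦ π (X ω))
      (hπm.comp (comap_measurable X)).stronglyMeasurable hπ ⟨s, hs, rfl⟩ ht,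
    ofReal_measureReal]

theorem setIntegral_inter_preimage_eq_setIntegral_mul (hX : Measurable X) (hA : Measurable A)
    (hU : Measurable U)
    (hAU : CondIndepFun (MeasurableSpace.comap X inferInstance) hX.comap_le A U P)
    (hB : MeasurableSet B) (hπm : Measurable π)
    (hπ : (fun ω ↦ π (X ω)) =ᵐ[P] P⟦A ⁻¹' B | MeasurableSpace.comap X inferInstance⟧)
    {h : 𝒳 × γ → ℝ} (hh : Measurable h) {s : Set 𝒳} (hs : MeasurableSet s) :
    ∫ ω in A ⁻¹' B ∩ X ⁻¹' s, h (X ω, U ω) ∂P = ∫ ω in X ⁻¹' s, π (X ω) * h (X ω, U ω) ∂P := by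
  have hXU : Measurable fun ω ↦ (X ω, U ω) := hX.prodMk hU
  have hπ_nonneg : 0 ≤ᵐ[P] fun ω ↦ π (X ω) := (condExp_indicator_one_nonneg _).trans_eq hπ.symm
  have hpre : (fun ω ↦ (X ω, U ω)) ⁻¹' (s ×ˢ Set.univ) = X ⁻¹' s := by
    rw [Set.mk_preimage_prod, Set.preimage_univ, Set.inter_univ]
  calc ∫ ω in A ⁻¹' B ∩ X ⁻¹' s, h (X ω, U ω) ∂P
      = ∫ z in s ×ˢ Set.univ, h z ∂(P.restrict (A ⁻¹' B)).map (fun ω ↦ (X ω, U ω)) := by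
        rw [setIntegral_map (hs.prod .univ) hh.aestronglyMeasurable hXU.aemeasurable, hpre,
          Measure.restrict_restrict (hX hs), Set.inter_comm]
    _ = ∫ z in s ×ˢ Set.univ, h z
          ∂(P.withDensity fun ω ↦ ENNReal.ofReal (π (X ω))).map (fun ω ↦ (X ω, U ω)) := by
        rw [map_restrict_preimage_eq_map_withDensity hX hA hU hAU hB hπm hπ]
    _ = ∫ ω in X ⁻¹' s, π (X ω) * h (X ω, U ω) ∂P := by
        rw [setIntegral_map (hs.prod .univ) hh.aestronglyMeasurable hXU.aemeasurable, hpre,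
          restrict_withDensity (hX hs), integral_withDensity_eq_integral_toReal_smul
            (f := fun ω ↦ ENNReal.ofReal (π (X ω))) (hπm.comp hX).ennreal_ofReal
            (.of_forall fun _ ↦ ENNReal.ofReal_lt_top)]
        refine integral_congr_ae ?_
        filter_upwards [ae_restrict_of_ae hπ_nonneg] with ω hω
        rw [ENNReal.toReal_ofReal hω, smul_eq_mul]

end Propensity

section Identification

variable {Ω 𝒳 𝒰 ι : Type*} {mΩ : MeasurableSpace Ω} [StandardBorelSpace Ω] [MeasurableSpace 𝒳]
  [MeasurableSpace 𝒰] [Fintype ι] [MeasurableSpace ι] [MeasurableSingletonClass ι]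
  {P : Measure Ω} [IsFiniteMeasure P] {X : Ω → 𝒳} {U : Ω → 𝒰} {A : Ω → ι}
  {f : 𝒳 → ι → 𝒰 → ℝ} {C : ℝ} {π : ι → 𝒳 → ℝ} {s : Set 𝒳}

theorem setIntegral_intervention_eq_sum [DecidableEq ι] (hX : Measurable X) (hU : Measurable U)
    (hA : Measurable A) (hf : Measurable fun p : 𝒳 × ι × 𝒰 ↦ f p.1 p.2.1 p.2.2)
    (hfbdd : ∀ x b u, |f x b u| ≤ C) (hπmeas : ∀ b, Measurable (π b))
    (hπ : ∀ b, (fun ω ↦ π b (X ω)) =ᵐ[P] P⟦A ⁻¹' {b} | MeasurableSpace.comap X inferInstance⟧)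
    (hNUC : CondIndepFun (MeasurableSpace.comap X inferInstance) hX.comap_le A U P)
    {Astar : Ω → ι} (hAstar : Measurable Astar)
    (hπstar : ∀ b, (fun ω ↦ π b (X ω)) =ᵐ[P]
      P[fun ω ↦ (if Astar ω = b then (1 : ℝ) else 0) |
        MeasurableSpace.comap (fun ω ↦ (X ω, A ω, U ω)) inferInstance])
    (a : ι) (hs : MeasurableSet s) :
    ∫ ω in A ⁻¹' {a} ∩ X ⁻¹' s, f (X ω) (Astar ω) (U ω) ∂P
      = ∑ b, ∫ ω in X ⁻¹' s, π a (X ω) * (π b (X ω) * f (X ω) b (U ω)) ∂P := by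
  have hfb : ∀ b, Measurable fun z : 𝒳 × 𝒰 ↦ f z.1 b z.2 :=
    fun b ↦ hf.comp (measurable_fst.prodMk (measurable_const.prodMk measurable_snd))
  have hfb_int : ∀ b, Integrable (fun ω ↦ f (X ω) b (U ω)) P := fun b ↦
    .of_bound ((hfb b).comp (hX.prodMk hU)).aestronglyMeasurable C (.of_forall fun _ ↦ hfbdd _ _ _)
  have hfb_meas : ∀ b, StronglyMeasurable[MeasurableSpace.comap (fun ω ↦ (X ω, A ω, U ω))
      inferInstance] fun ω ↦ f (X ω) b (U ω) := fun b ↦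
    ((hfb b).comp (measurable_fst.prodMk (measurable_snd.comp measurable_snd))).comp
      (comap_measurable _) |>.stronglyMeasurable
  have hE : MeasurableSet[MeasurableSpace.comap (fun ω ↦ (X ω, A ω, U ω)) inferInstance]
      (A ⁻¹' {a} ∩ X ⁻¹' s) :=
    ⟨s ×ˢ {a} ×ˢ Set.univ, hs.prod ((measurableSet_singleton a).prod .univ), by
      ext ω; simp [and_comm]⟩
  rw [setIntegral_comp_eq_sum_mul_of_condExp (hX.prodMk (hA.prodMk hU)).comap_le hAstar hfb_meas
    hfb_int hπstar hE]
  refine Finset.sum_congr rfl fun b _ ↦ ?_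
  exact setIntegral_inter_preimage_eq_setIntegral_mul hX hA hU hNUC (measurableSet_singleton a)
    (hπmeas a) (hπ a) (h := fun z ↦ π b z.1 * f z.1 b z.2)
    ((hπmeas b).comp measurable_fst |>.mul (hfb b)) hs

theorem setIntegral_outcomeRegression_eq_sum (hX : Measurable X) (hU : Measurable U)
    (hA : Measurable A) (hf : Measurable fun p : 𝒳 × ι × 𝒰 ↦ f p.1 p.2.1 p.2.2)
    (hfbdd : ∀ x b u, |f x b u| ≤ C) (hπmeas : ∀ b, Measurable (π b))
    (hπ : ∀ b, (fun ω ↦ π b (X ω)) =ᵐ[P] P⟦A ⁻¹' {b} | MeasurableSpace.comap X inferInstance⟧)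
    (hNUC : CondIndepFun (MeasurableSpace.comap X inferInstance) hX.comap_le A U P)
    {mP : 𝒳 → ℝ} (hmPmeas : Measurable mP)
    (hmP : (fun ω ↦ mP (X ω)) =ᵐ[P]
      P[fun ω ↦ f (X ω) (A ω) (U ω) | MeasurableSpace.comap X inferInstance])
    (a : ι) (hs : MeasurableSet s) :
    ∫ ω in A ⁻¹' {a} ∩ X ⁻¹' s, mP (X ω) ∂P
      = ∑ b, ∫ ω in X ⁻¹' s, π b (X ω) * (π a (X ω) * f (X ω) b (U ω)) ∂P := by
  have hfb : ∀ b, Measurable fun z : 𝒳 × 𝒰 ↦ f z.1 b z.2 :=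
    fun b ↦ hf.comp (measurable_fst.prodMk (measurable_const.prodMk measurable_snd))
  have hY : Measurable fun ω ↦ f (X ω) (A ω) (U ω) := hf.comp (hX.prodMk (hA.prodMk hU))
  have hY_bdd : ∀ᵐ ω ∂P, ‖f (X ω) (A ω) (U ω)‖ ≤ C := .of_forall fun _ ↦ hfbdd _ _ _
  have hπa_int : Integrable (fun ω ↦ π a (X ω)) P := integrable_condExp.congr (hπ a).symm
  have trade : ∀ b {h : 𝒳 × 𝒰 → ℝ}, Measurable h → ∫ ω in A ⁻¹' {b} ∩ X ⁻¹' s, h (X ω, U ω) ∂P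
      = ∫ ω in X ⁻¹' s, π b (X ω) * h (X ω, U ω) ∂P := fun b _ hh ↦
    setIntegral_inter_preimage_eq_setIntegral_mul hX hA hU hNUC (measurableSet_singleton b)
      (hπmeas b) (hπ b) hh hs
  calc ∫ ω in A ⁻¹' {a} ∩ X ⁻¹' s, mP (X ω) ∂P
      = ∫ ω in X ⁻¹' s, π a (X ω) * mP (X ω) ∂P :=
        trade a (h := fun z ↦ mP z.1) (hmPmeas.comp measurable_fst)
    _ = ∫ ω in X ⁻¹' s, π a (X ω) * f (X ω) (A ω) (U ω) ∂P := by
        rw [← setIntegral_mul_condExp_s2 hX.comap_le (g := fun ω ↦ π a (X ω))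
          ((hπmeas a).comp (comap_measurable X)).stronglyMeasurable
          (hπa_int.mul_bdd hY.aestronglyMeasurable hY_bdd)
          (.of_bound hY.aestronglyMeasurable C hY_bdd) ⟨s, hs, rfl⟩]
        refine setIntegral_congr_ae (hX hs) ?_
        filter_upwards [hmP] with ω h _
        rw [h]
    _ = ∑ b, ∫ ω in A ⁻¹' {b} ∩ X ⁻¹' s, π a (X ω) * f (X ω) b (U ω) ∂P := by
        rw [integral_comp_eq_sum_setIntegral_preimage hA
          (F := fun b ω ↦ π a (X ω) * f (X ω) b (U ω)) fun b ↦ (hπa_int.mul_bdd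
            ((hfb b).comp (hX.prodMk hU)).aestronglyMeasurable
            (.of_forall fun _ ↦ hfbdd _ _ _)).restrict]
        simp_rw [Measure.restrict_restrict (hA (measurableSet_singleton _))]
    _ = ∑ b, ∫ ω in X ⁻¹' s, π b (X ω) * (π a (X ω) * f (X ω) b (U ω)) ∂P :=
        Finset.sum_congr rfl fun b _ ↦
          trade b (h := fun z ↦ π a z.1 * f z.1 b z.2)
            ((hπmeas a).comp measurable_fst |>.mul (hfb b))

end Identification

theorem identification_indirect_standardization_general
    {Ω 𝒳 𝒰 : Type*} [MeasurableSpace Ω] [StandardBorelSpace Ω]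
    [MeasurableSpace 𝒳]
    [MeasurableSpace 𝒰]
    (P : Measure Ω) [IsProbabilityMeasure P]
    (m : ℕ)
    (X : Ω → 𝒳) (U : Ω → 𝒰) (A : Ω → Fin m)
    (hX : Measurable X) (hU : Measurable U) (hA : Measurable A)
    (f : 𝒳 → Fin m → 𝒰 → ℝ)
    (hf : Measurable fun p : 𝒳 × Fin m × 𝒰 => f p.1 p.2.1 p.2.2)
    (C : ℝ) (hfbdd : ∀ x b u, |f x b u| ≤ C)
    -- propensity scores: π(b|X) is a version of E[1{A=b} | σ(X)]
    (π : Fin m → 𝒳 → ℝ) (hπmeas : ∀ b, Measurable (π b))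
    (hπ : ∀ b, (fun ω => π b (X ω)) =ᵐ[P]
      P[fun ω => (if A ω = b then (1 : ℝ) else 0) | MeasurableSpace.comap X inferInstance])
    -- no unmeasured confounding: A ⫫ U | σ(X)
    (hNUC : CondIndepFun (MeasurableSpace.comap X inferInstance) hX.comap_le A U P)
    -- stochastic intervention A* whose intervention distribution is π itself:
    -- π(b|X) is a version of E[1{A*=b} | σ(X, A, U)]
    (Astar : Ω → Fin m) (hAstar : Measurable Astar)
    (hπstar : ∀ b, (fun ω => π b (X ω)) =ᵐ[P]
      P[fun ω => (if Astar ω = b then (1 : ℝ) else 0) |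
        MeasurableSpace.comap (fun ω => (X ω, A ω, U ω)) inferInstance])
    -- overall outcome regression m_P : X → ℝ, a version of E[Y | σ(X)]
    (mP : 𝒳 → ℝ) (hmPmeas : Measurable mP)
    (hmP : (fun ω => mP (X ω)) =ᵐ[P]
      P[fun ω => f (X ω) (A ω) (U ω) | MeasurableSpace.comap X inferInstance])
    -- focal player and reference population
    (a : Fin m) (𝒳' : Set 𝒳) (h𝒳' : MeasurableSet 𝒳')
    (E : Set Ω) (hE : E = {ω | A ω = a} ∩ {ω | X ω ∈ 𝒳'}) :
    (∫ ω in E, f (X ω) (Astar ω) (U ω) ∂P) / (P E).toReal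
      = (∫ ω in E, mP (X ω) ∂P) / (P E).toReal := by
  subst hE
  have hπX : ∀ b, (fun ω ↦ π b (X ω)) =ᵐ[P] P⟦A ⁻¹' {b} | MeasurableSpace.comap X inferInstance⟧ :=
    fun b ↦ by rw [indicator_preimage_singleton_one]; exact hπ b
  congr 1
  change ∫ ω in A ⁻¹' {a} ∩ X ⁻¹' 𝒳', _ ∂P = ∫ ω in A ⁻¹' {a} ∩ X ⁻¹' 𝒳', _ ∂P
  rw [setIntegral_intervention_eq_sum hX hU hA hf hfbdd hπmeas hπX hNUC hAstar hπstar a h𝒳',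
    setIntegral_outcomeRegression_eq_sum hX hU hA hf hfbdd hπmeas hπX hNUC hmPmeas hmP a h𝒳']
  simp only [mul_left_comm]

/-- Identification of the indirect standardization parameter. -/
theorem identification_indirect_standardization
    {Ω 𝒳 𝒰 : Type*} [MeasurableSpace Ω] [StandardBorelSpace Ω]
    [MeasurableSpace 𝒳] [StandardBorelSpace 𝒳]
    [MeasurableSpace 𝒰] [StandardBorelSpace 𝒰]
    (P : Measure Ω) [IsProbabilityMeasure P]
    (m : ℕ) (hm : 1 ≤ m)
    (X : Ω → 𝒳) (U : Ω → 𝒰) (A : Ω → Fin m)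
    (hX : Measurable X) (hU : Measurable U) (hA : Measurable A)
    (f : 𝒳 → Fin m → 𝒰 → ℝ)
    (hf : Measurable fun p : 𝒳 × Fin m × 𝒰 => f p.1 p.2.1 p.2.2)
    (C : ℝ) (hfbdd : ∀ x b u, |f x b u| ≤ C)
    -- propensity scores: π(b|X) is a version of E[1{A=b} | σ(X)]
    (π : Fin m → 𝒳 → ℝ) (hπmeas : ∀ b, Measurable (π b))
    (hπ01 : ∀ b x, 0 ≤ π b x ∧ π b x ≤ 1)
    (hπ : ∀ b, (fun ω => π b (X ω)) =ᵐ[P]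
      P[fun ω => (if A ω = b then (1 : ℝ) else 0) | MeasurableSpace.comap X inferInstance])
    -- no unmeasured confounding: A ⫫ U | σ(X)
    (hNUC : CondIndepFun (MeasurableSpace.comap X inferInstance) hX.comap_le A U P)
    -- stochastic intervention A* whose intervention distribution is π itself:
    -- π(b|X) is a version of E[1{A*=b} | σ(X, A, U)]
    (Astar : Ω → Fin m) (hAstar : Measurable Astar)
    (hπstar : ∀ b, (fun ω => π b (X ω)) =ᵐ[P]
      P[fun ω => (if Astar ω = b then (1 : ℝ) else 0) |
        MeasurableSpace.comap (fun ω => (X ω, A ω, U ω)) inferInstance])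
    -- overall outcome regression m_P : X → ℝ, a version of E[Y | σ(X)]
    (mP : 𝒳 → ℝ) (hmPmeas : Measurable mP)
    (hmP : (fun ω => mP (X ω)) =ᵐ[P]
      P[fun ω => f (X ω) (A ω) (U ω) | MeasurableSpace.comap X inferInstance])
    -- focal player and reference population
    (a : Fin m) (𝒳' : Set 𝒳) (h𝒳' : MeasurableSet 𝒳')
    (E : Set Ω) (hE : E = {ω | A ω = a} ∩ {ω | X ω ∈ 𝒳'})
    (hPE : 0 < P E) :
    (∫ ω in E, f (X ω) (Astar ω) (U ω) ∂P) / (P E).toReal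
      = (∫ ω in E, mP (X ω) ∂P) / (P E).toReal :=
  identification_indirect_standardization_general P m X U A hX hU hA f hf C hfbdd π hπmeas hπ hNUC
    Astar hAstar hπstar mP hmPmeas hmP a 𝒳' h𝒳' E hE
end

section
/- Identification of the performance-above-random-replacement parameter: Assume no unmeasured confounding and that for every b ∈ Fin m, π(b|X) > 0 P-a.s. Let (A*, π*) be the uniform stochastic intervention, i.e. π*(b|x) = 1/m for all b ∈ Fin m and x ∈ 𝒳. Fix a ∈ Fin m and a measurable set 𝒳' ⊆ 𝒳 with P(A = a, X ∈ 𝒳') > 0. Then E[f(X, A*, U) | A = a, X ∈ 𝒳'] = (1/m)·Σ_{b ∈ Fin m} E[μ(b, X) | A = a, X ∈ 𝒳']. -/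
/-!
No unmeasured confounding says that the law of `(X, U)` on the event `{A = c}` is its law under
`π(c|X) · P`: on rectangles this is the product rule for conditional expectations given `σ(X)`,
and finite measures agreeing on rectangles agree. Hence `∫ 1{A = c} g(X, U) = ∫ π(c|X) g(X, U)`
for every `g`. With `c = b` this gives `π(b|X) E[Y(b) | X] = π(b|X) μ(b, X)`, so
`E[Y(b) | X] = μ(b, X)` by positivity; with `c = a` it transports this to `∫ Y(b) = ∫ μ(b, X)`
over `{A = a, X ∈ 𝒳'}`. Finally `f(X, A*, U) = ∑_b 1{A* = b} f(X, b, U)`, and since `f(X, b, U)`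
and the event are `σ(X, A, U)`-measurable, each indicator may be replaced by its conditional
expectation `1/m`.
-/

open MeasureTheory ProbabilityTheory

lemma integrable_ite_eq_one_zero {Ω α : Type*} [MeasurableSpace Ω] [MeasurableSpace α]
    [MeasurableSingletonClass α] [DecidableEq α] {μ : Measure Ω} [IsFiniteMeasure μ]
    {A : Ω → α} (hA : Measurable A) (c : α) :
    Integrable (fun ω => if A ω = c then (1 : ℝ) else 0) μ :=
  .of_bound
    (measurable_const.ite (hA (measurableSet_singleton c)) measurable_const).aestronglyMeasurable 1
    (.of_forall fun ω => by split_ifs <;> simp)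

lemma setIntegral_preimage_singleton_inter_eq_setIntegral_ite_mul {Ω α : Type*}
    [MeasurableSpace Ω] [MeasurableSpace α] [MeasurableSingletonClass α] [DecidableEq α]
    {μ : Measure Ω} {A : Ω → α} (hA : Measurable A) (c : α) (F : Ω → ℝ) (S : Set Ω) :
    ∫ ω in A ⁻¹' {c} ∩ S, F ω ∂μ = ∫ ω in S, (if A ω = c then (1 : ℝ) else 0) * F ω ∂μ := by
  rw [Set.inter_comm, ← setIntegral_indicator (hA (measurableSet_singleton c))]
  congr 1 with ω
  by_cases h : A ω = c <;> simp [h]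

lemma setIntegral_comp_eq_sum_setIntegral_ite_mul {Ω ι : Type*} [MeasurableSpace Ω]
    [MeasurableSpace ι] [MeasurableSingletonClass ι] [Fintype ι] [DecidableEq ι]
    {μ : Measure Ω} [IsFiniteMeasure μ] {B : Ω → ι} (hB : Measurable B) {F : ι → Ω → ℝ}
    (hF : ∀ b, Integrable (F b) μ) (S : Set Ω) :
    ∫ ω in S, F (B ω) ω ∂μ = ∑ b, ∫ ω in S, (if B ω = b then (1 : ℝ) else 0) * F b ω ∂μ := by
  rw [← integral_finsetSum _ fun b _ =>
    ((hF b).bdd_mul (c := 1) (integrable_ite_eq_one_zero hB b).aestronglyMeasurable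
      (.of_forall fun ω => by split_ifs <;> simp)).integrableOn]
  congr 1 with ω
  simp [ite_mul]

lemma setIntegral_mul_condExp_of_bound {Ω : Type*} {m mΩ : MeasurableSpace Ω} {μ : Measure Ω}
    [IsFiniteMeasure μ] (hm : m ≤ mΩ) {h F : Ω → ℝ} (hh : StronglyMeasurable[m] h) {c : ℝ}
    (hh_bound : ∀ᵐ ω ∂μ, ‖h ω‖ ≤ c) (hF : Integrable F μ) {S : Set Ω}
    (hS : MeasurableSet[m] S) :
    ∫ ω in S, h ω * μ[F | m] ω ∂μ = ∫ ω in S, h ω * F ω ∂μ := by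
  have : IsFiniteMeasure (μ.trim hm) := isFiniteMeasure_trim hm
  rw [← setIntegral_condExp hm (hF.bdd_mul (hh.mono hm).aestronglyMeasurable hh_bound) hS]
  exact integral_congr_ae (ae_restrict_of_ae
    (condExp_stronglyMeasurable_mul_of_bound hm hh hF c hh_bound).symm)

lemma setIntegral_mul_eq_mul_setIntegral_of_condExp_ae_eq_const {Ω : Type*}
    {m mΩ : MeasurableSpace Ω} {μ : Measure Ω} [IsFiniteMeasure μ] (hm : m ≤ mΩ) {G F : Ω → ℝ}
    (hG : Integrable G μ) {κ : ℝ} (hGκ : (fun _ => κ) =ᵐ[μ] μ[G | m])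
    (hF : StronglyMeasurable[m] F) {C : ℝ} (hF_bound : ∀ᵐ ω ∂μ, ‖F ω‖ ≤ C) {S : Set Ω}
    (hS : MeasurableSet[m] S) :
    ∫ ω in S, G ω * F ω ∂μ = κ * ∫ ω in S, F ω ∂μ := by
  simp_rw [mul_comm (G _), ← setIntegral_mul_condExp_of_bound hm hF hF_bound hG hS,
    ← integral_const_mul]
  exact integral_congr_ae (ae_restrict_of_ae (hGκ.mono fun ω h => by
    dsimp only at h ⊢; rw [← h, mul_comm]))

section NoUnmeasuredConfounding

variable {Ω 𝒳 𝒰 α : Type*} [MeasurableSpace Ω] [StandardBorelSpace Ω] [MeasurableSpace 𝒳]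
  [MeasurableSpace 𝒰] [MeasurableSpace α] [MeasurableSingletonClass α] [DecidableEq α]
  {P : Measure Ω} [IsFiniteMeasure P] {X : Ω → 𝒳} {U : Ω → 𝒰} {A : Ω → α} {p : 𝒳 → ℝ} {c : α}

lemma measureReal_inter_preimage_eq_setIntegral_propensity (hX : Measurable X)
    (hU : Measurable U) (hA : Measurable A)
    (hNUC : CondIndepFun (MeasurableSpace.comap X inferInstance) hX.comap_le A U P)
    (hp_meas : Measurable p) (hp01 : ∀ x, 0 ≤ p x ∧ p x ≤ 1)
    (hp : (fun ω => p (X ω)) =ᵐ[P]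
      P[fun ω => if A ω = c then (1 : ℝ) else 0 | MeasurableSpace.comap X inferInstance])
    {t₁ : Set 𝒳} {t₂ : Set 𝒰} (ht₁ : MeasurableSet t₁) (ht₂ : MeasurableSet t₂) :
    P.real (A ⁻¹' {c} ∩ (X ⁻¹' t₁ ∩ U ⁻¹' t₂)) = ∫ ω in X ⁻¹' t₁ ∩ U ⁻¹' t₂, p (X ω) ∂P := by
  have : IsFiniteMeasure (P.trim hX.comap_le) := isFiniteMeasure_trim hX.comap_le
  have hind : (fun ω => if A ω = c then (1 : ℝ) else 0) = (A ⁻¹' {c}).indicator fun _ => 1 := by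
    funext ω; by_cases h : A ω = c <;> simp [h]
  have hS : MeasurableSet[MeasurableSpace.comap X inferInstance] (X ⁻¹' t₁) := ⟨t₁, ht₁, rfl⟩
  have hAU : MeasurableSet (A ⁻¹' {c} ∩ U ⁻¹' t₂) := (hA (measurableSet_singleton c)).inter (hU ht₂)
  have hprod := (condIndepFun_iff_condExp_inter_preimage_eq_mul hA hU).mp hNUC {c} t₂
    (measurableSet_singleton c) ht₂
  calc P.real (A ⁻¹' {c} ∩ (X ⁻¹' t₁ ∩ U ⁻¹' t₂))
      = ∫ ω in X ⁻¹' t₁, (A ⁻¹' {c} ∩ U ⁻¹' t₂).indicator (fun _ => (1 : ℝ)) ω ∂P := by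
        rw [setIntegral_indicator hAU, setIntegral_const, smul_eq_mul, mul_one,
          Set.inter_left_comm]
    _ = ∫ ω in X ⁻¹' t₁, (P⟦A ⁻¹' {c} ∩ U ⁻¹' t₂ | MeasurableSpace.comap X inferInstance⟧) ω ∂P :=
        (setIntegral_condExp hX.comap_le ((integrable_const 1).indicator hAU) hS).symm
    _ = ∫ ω in X ⁻¹' t₁, p (X ω) * (P⟦U ⁻¹' t₂ | MeasurableSpace.comap X inferInstance⟧) ω ∂P := by
        refine integral_congr_ae (ae_restrict_of_ae ?_)
        filter_upwards [hprod, hp] with ω hω hpω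
        rw [hω, hpω, hind]
    _ = ∫ ω in X ⁻¹' t₁, p (X ω) * (U ⁻¹' t₂).indicator (fun _ => (1 : ℝ)) ω ∂P :=
        setIntegral_mul_condExp_of_bound hX.comap_le
          (hp_meas.comp (Measurable.of_comap_le le_rfl)).stronglyMeasurable
          (.of_forall fun ω => (Real.norm_of_nonneg (hp01 _).1).trans_le (hp01 _).2)
          ((integrable_const 1).indicator (hU ht₂)) hS
    _ = ∫ ω in X ⁻¹' t₁ ∩ U ⁻¹' t₂, p (X ω) ∂P := by
        rw [← setIntegral_indicator (hU ht₂)]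
        congr 1 with ω
        by_cases h : ω ∈ U ⁻¹' t₂ <;> simp [h]

lemma map_restrict_eq_map_withDensity_propensity (hX : Measurable X)
    (hU : Measurable U) (hA : Measurable A)
    (hNUC : CondIndepFun (MeasurableSpace.comap X inferInstance) hX.comap_le A U P)
    (hp_meas : Measurable p) (hp01 : ∀ x, 0 ≤ p x ∧ p x ≤ 1)
    (hp : (fun ω => p (X ω)) =ᵐ[P]
      P[fun ω => if A ω = c then (1 : ℝ) else 0 | MeasurableSpace.comap X inferInstance]) :
    (P.restrict (A ⁻¹' {c})).map (fun ω => (X ω, U ω))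
      = (P.withDensity fun ω => (p (X ω)).toNNReal).map (fun ω => (X ω, U ω)) := by
  have hV : Measurable fun ω => (X ω, U ω) := hX.prodMk hU
  refine Measure.ext_prod fun {t₁ t₂} ht₁ ht₂ => ?_
  have hp_int : Integrable (fun ω => p (X ω)) (P.restrict (X ⁻¹' t₁ ∩ U ⁻¹' t₂)) :=
    .of_bound (hp_meas.comp hX).aestronglyMeasurable 1
      (.of_forall fun ω => (Real.norm_of_nonneg (hp01 _).1).trans_le (hp01 _).2)
  rw [Measure.map_apply hV (ht₁.prod ht₂), Measure.map_apply hV (ht₁.prod ht₂),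
    Set.mk_preimage_prod, Measure.restrict_apply' (hA (measurableSet_singleton c)),
    withDensity_apply _ ((hX ht₁).inter (hU ht₂)), Set.inter_comm, ← ofReal_measureReal,
    measureReal_inter_preimage_eq_setIntegral_propensity hX hU hA hNUC hp_meas hp01 hp ht₁ ht₂,
    ofReal_integral_eq_lintegral_ofReal hp_int (.of_forall fun ω => (hp01 (X ω)).1)]
  rfl

lemma integral_ite_mul_eq_integral_propensity_mul (hX : Measurable X)
    (hU : Measurable U) (hA : Measurable A)
    (hNUC : CondIndepFun (MeasurableSpace.comap X inferInstance) hX.comap_le A U P)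
    (hp_meas : Measurable p) (hp01 : ∀ x, 0 ≤ p x ∧ p x ≤ 1)
    (hp : (fun ω => p (X ω)) =ᵐ[P]
      P[fun ω => if A ω = c then (1 : ℝ) else 0 | MeasurableSpace.comap X inferInstance])
    {g : 𝒳 × 𝒰 → ℝ} (hg : Measurable g) :
    ∫ ω, (if A ω = c then (1 : ℝ) else 0) * g (X ω, U ω) ∂P
      = ∫ ω, p (X ω) * g (X ω, U ω) ∂P := by
  have hV : Measurable fun ω => (X ω, U ω) := hX.prodMk hU
  calc ∫ ω, (if A ω = c then (1 : ℝ) else 0) * g (X ω, U ω) ∂P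
      = ∫ ω in A ⁻¹' {c}, g (X ω, U ω) ∂P := by
        rw [← integral_indicator (hA (measurableSet_singleton c))]
        congr 1 with ω
        by_cases h : A ω = c <;> simp [h]
    _ = ∫ v, g v ∂(P.restrict (A ⁻¹' {c})).map (fun ω => (X ω, U ω)) :=
        (integral_map hV.aemeasurable hg.aestronglyMeasurable).symm
    _ = ∫ v, g v ∂(P.withDensity fun ω => (p (X ω)).toNNReal).map (fun ω => (X ω, U ω)) := by
        rw [map_restrict_eq_map_withDensity_propensity hX hU hA hNUC hp_meas hp01 hp]
    _ = ∫ ω, p (X ω) * g (X ω, U ω) ∂P := by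
        rw [integral_map hV.aemeasurable hg.aestronglyMeasurable,
          integral_withDensity_eq_integral_smul
            (f := fun ω => (p (X ω)).toNNReal) (hp_meas.comp hX).real_toNNReal]
        congr 1 with ω
        rw [NNReal.smul_def, smul_eq_mul, Real.coe_toNNReal _ (hp01 (X ω)).1]

lemma setIntegral_ite_mul_eq_setIntegral_propensity_mul (hX : Measurable X)
    (hU : Measurable U) (hA : Measurable A)
    (hNUC : CondIndepFun (MeasurableSpace.comap X inferInstance) hX.comap_le A U P)
    (hp_meas : Measurable p) (hp01 : ∀ x, 0 ≤ p x ∧ p x ≤ 1)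
    (hp : (fun ω => p (X ω)) =ᵐ[P]
      P[fun ω => if A ω = c then (1 : ℝ) else 0 | MeasurableSpace.comap X inferInstance])
    {g : 𝒳 × 𝒰 → ℝ} (hg : Measurable g) {s : Set 𝒳} (hs : MeasurableSet s) :
    ∫ ω in X ⁻¹' s, (if A ω = c then (1 : ℝ) else 0) * g (X ω, U ω) ∂P
      = ∫ ω in X ⁻¹' s, p (X ω) * g (X ω, U ω) ∂P := by
  have key := integral_ite_mul_eq_integral_propensity_mul hX hU hA hNUC hp_meas hp01 hp
    (hg.indicator (hs.prod .univ))
  rw [← integral_indicator (hX hs), ← integral_indicator (hX hs)]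
  convert key using 2 <;> ext ω <;> by_cases h : X ω ∈ s <;> simp [h]

lemma condExp_counterfactual_ae_eq (hX : Measurable X)
    (hU : Measurable U) (hA : Measurable A)
    (hNUC : CondIndepFun (MeasurableSpace.comap X inferInstance) hX.comap_le A U P)
    (hp_meas : Measurable p) (hp01 : ∀ x, 0 ≤ p x ∧ p x ≤ 1)
    (hp : (fun ω => p (X ω)) =ᵐ[P]
      P[fun ω => if A ω = c then (1 : ℝ) else 0 | MeasurableSpace.comap X inferInstance])
    (hpos : ∀ᵐ ω ∂P, 0 < p (X ω))
    {g : 𝒳 × 𝒰 → ℝ} (hg : Measurable g) (hg_int : Integrable (fun ω => g (X ω, U ω)) P)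
    {Y : Ω → ℝ} (hY : ∀ ω, A ω = c → Y ω = g (X ω, U ω)) {q : 𝒳 → ℝ} (hq : Measurable q)
    (hqp : (fun ω => q (X ω) * p (X ω)) =ᵐ[P]
      P[fun ω => (if A ω = c then (1 : ℝ) else 0) * Y ω | MeasurableSpace.comap X inferInstance]) :
    P[fun ω => g (X ω, U ω) | MeasurableSpace.comap X inferInstance] =ᵐ[P] fun ω => q (X ω) := by
  have hYg : (fun ω => (if A ω = c then (1 : ℝ) else 0) * Y ω)
      = fun ω => (if A ω = c then (1 : ℝ) else 0) * g (X ω, U ω) := by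
    funext ω; by_cases h : A ω = c <;> simp [h, hY]
  rw [hYg] at hqp
  have : IsFiniteMeasure (P.trim hX.comap_le) := isFiniteMeasure_trim hX.comap_le
  have hXX : Measurable[MeasurableSpace.comap X inferInstance] X := .of_comap_le le_rfl
  have hp_bound : ∀ᵐ ω ∂P, ‖p (X ω)‖ ≤ 1 :=
    .of_forall fun ω => (Real.norm_of_nonneg (hp01 _).1).trans_le (hp01 _).2
  have hpg : Integrable (fun ω => p (X ω) * g (X ω, U ω)) P :=
    hg_int.bdd_mul (hp_meas.comp hX).aestronglyMeasurable hp_bound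
  have hindg : Integrable (fun ω => (if A ω = c then (1 : ℝ) else 0) * g (X ω, U ω)) P :=
    hg_int.bdd_mul (c := 1) (integrable_ite_eq_one_zero hA c).aestronglyMeasurable
      (.of_forall fun ω => by split_ifs <;> simp)
  have hqp_condExp : (fun ω => q (X ω) * p (X ω)) =ᵐ[P]
      P[fun ω => p (X ω) * g (X ω, U ω) | MeasurableSpace.comap X inferInstance] := by
    refine ae_eq_condExp_of_forall_setIntegral_eq hX.comap_le hpg
      (fun _ _ _ => (integrable_condExp.congr hqp.symm).integrableOn) ?_
      ((hq.comp hXX).mul (hp_meas.comp hXX)).aestronglyMeasurable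
    rintro _ ⟨s, hs, rfl⟩ _
    rw [integral_congr_ae (ae_restrict_of_ae hqp),
      setIntegral_condExp hX.comap_le hindg ⟨s, hs, rfl⟩,
      setIntegral_ite_mul_eq_setIntegral_propensity_mul hX hU hA hNUC hp_meas hp01 hp hg hs]
  filter_upwards [hqp_condExp, hpos, condExp_stronglyMeasurable_mul_of_bound hX.comap_le
    (hp_meas.comp hXX).stronglyMeasurable hg_int 1 hp_bound] with ω hω hposω hpull
  refine mul_right_cancel₀ hposω.ne' ?_
  rw [hω, mul_comm]
  exact hpull.symm

lemma setIntegral_counterfactual_eq_of_condExp_ae_eq (hX : Measurable X)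
    (hU : Measurable U) (hA : Measurable A)
    (hNUC : CondIndepFun (MeasurableSpace.comap X inferInstance) hX.comap_le A U P)
    (hp_meas : Measurable p) (hp01 : ∀ x, 0 ≤ p x ∧ p x ≤ 1)
    (hp : (fun ω => p (X ω)) =ᵐ[P]
      P[fun ω => if A ω = c then (1 : ℝ) else 0 | MeasurableSpace.comap X inferInstance])
    {g : 𝒳 × 𝒰 → ℝ} (hg : Measurable g) (hg_int : Integrable (fun ω => g (X ω, U ω)) P)
    {q : 𝒳 → ℝ} (hq : Measurable q)
    (hgq : P[fun ω => g (X ω, U ω) | MeasurableSpace.comap X inferInstance]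
      =ᵐ[P] fun ω => q (X ω))
    {s : Set 𝒳} (hs : MeasurableSet s) :
    ∫ ω in A ⁻¹' {c} ∩ X ⁻¹' s, g (X ω, U ω) ∂P = ∫ ω in A ⁻¹' {c} ∩ X ⁻¹' s, q (X ω) ∂P := by
  have hpX : StronglyMeasurable[MeasurableSpace.comap X inferInstance] fun ω => p (X ω) :=
    (hp_meas.comp (Measurable.of_comap_le le_rfl)).stronglyMeasurable
  have hp_bound : ∀ᵐ ω ∂P, ‖p (X ω)‖ ≤ 1 :=
    .of_forall fun ω => (Real.norm_of_nonneg (hp01 _).1).trans_le (hp01 _).2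
  calc ∫ ω in A ⁻¹' {c} ∩ X ⁻¹' s, g (X ω, U ω) ∂P
      = ∫ ω in X ⁻¹' s, (if A ω = c then (1 : ℝ) else 0) * g (X ω, U ω) ∂P :=
        setIntegral_preimage_singleton_inter_eq_setIntegral_ite_mul hA c _ _
    _ = ∫ ω in X ⁻¹' s, p (X ω) * g (X ω, U ω) ∂P :=
        setIntegral_ite_mul_eq_setIntegral_propensity_mul hX hU hA hNUC hp_meas hp01 hp hg hs
    _ = ∫ ω in X ⁻¹' s,
          p (X ω) * P[fun ω => g (X ω, U ω) | MeasurableSpace.comap X inferInstance] ω ∂P :=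
        (setIntegral_mul_condExp_of_bound hX.comap_le hpX hp_bound hg_int ⟨s, hs, rfl⟩).symm
    _ = ∫ ω in X ⁻¹' s, p (X ω) * q (X ω) ∂P :=
        integral_congr_ae (ae_restrict_of_ae (hgq.mono fun ω h => congrArg (p (X ω) * ·) h))
    _ = ∫ ω in X ⁻¹' s, (if A ω = c then (1 : ℝ) else 0) * q (X ω) ∂P :=
        (setIntegral_ite_mul_eq_setIntegral_propensity_mul hX hU hA hNUC hp_meas hp01 hp
          (g := fun v => q v.1) (hq.comp measurable_fst) hs).symm
    _ = ∫ ω in A ⁻¹' {c} ∩ X ⁻¹' s, q (X ω) ∂P :=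
        (setIntegral_preimage_singleton_inter_eq_setIntegral_ite_mul hA c _ _).symm

end NoUnmeasuredConfounding

theorem identification_random_replacement_general
    {Ω 𝒳 𝒰 : Type*} [MeasurableSpace Ω] [StandardBorelSpace Ω]
    [MeasurableSpace 𝒳] [MeasurableSpace 𝒰]
    (P : Measure Ω) [IsProbabilityMeasure P]
    (m : ℕ)
    (X : Ω → 𝒳) (U : Ω → 𝒰) (A : Ω → Fin m)
    (hX : Measurable X) (hU : Measurable U) (hA : Measurable A)
    (f : 𝒳 → Fin m → 𝒰 → ℝ)
    (hf : Measurable fun p : 𝒳 × Fin m × 𝒰 => f p.1 p.2.1 p.2.2)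
    (C : ℝ) (hfbdd : ∀ x b u, |f x b u| ≤ C)
    -- propensity scores: π(b|X) is a version of E[1{A=b} | σ(X)]
    (π : Fin m → 𝒳 → ℝ) (hπmeas : ∀ b, Measurable (π b))
    (hπ01 : ∀ b x, 0 ≤ π b x ∧ π b x ≤ 1)
    (hπ : ∀ b, (fun ω => π b (X ω)) =ᵐ[P]
      P[fun ω => (if A ω = b then (1 : ℝ) else 0) | MeasurableSpace.comap X inferInstance])
    -- outcome regression: μ(b,X)·π(b|X) is a version of E[1{A=b}·Y | σ(X)]
    (μreg : Fin m → 𝒳 → ℝ) (hμmeas : ∀ b, Measurable (μreg b))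
    (hμ : ∀ b, (fun ω => μreg b (X ω) * π b (X ω)) =ᵐ[P]
      P[fun ω => (if A ω = b then (1 : ℝ) else 0) * f (X ω) (A ω) (U ω) |
        MeasurableSpace.comap X inferInstance])
    -- no unmeasured confounding: A ⫫ U | σ(X)
    (hNUC : CondIndepFun (MeasurableSpace.comap X inferInstance) hX.comap_le A U P)
    -- positivity: every player has positive propensity almost surely
    (hpos : ∀ b : Fin m, ∀ᵐ ω ∂P, 0 < π b (X ω))
    -- uniform stochastic intervention: (1/m) is a version of E[1{A*=b} | σ(X, A, U)]
    (Astar : Ω → Fin m) (hAstar : Measurable Astar)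
    (hπstar : ∀ b : Fin m, (fun _ => (1 : ℝ) / m) =ᵐ[P]
      P[fun ω => (if Astar ω = b then (1 : ℝ) else 0) |
        MeasurableSpace.comap (fun ω => (X ω, A ω, U ω)) inferInstance])
    -- focal player and reference population
    (a : Fin m) (𝒳' : Set 𝒳) (h𝒳' : MeasurableSet 𝒳')
    (E : Set Ω) (hE : E = {ω | A ω = a} ∩ {ω | X ω ∈ 𝒳'}) :
    (∫ ω in E, f (X ω) (Astar ω) (U ω) ∂P) / (P E).toReal
      = (1 / m) * ∑ b : Fin m,
          (∫ ω in E, μreg b (X ω) ∂P) / (P E).toReal := by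
  have hfb (b : Fin m) : Measurable fun v : 𝒳 × 𝒰 => f v.1 b v.2 :=
    hf.comp (measurable_fst.prodMk (measurable_const.prodMk measurable_snd))
  have hf_bound (b : Fin m) : ∀ᵐ ω ∂P, ‖f (X ω) b (U ω)‖ ≤ C :=
    .of_forall fun ω => (Real.norm_eq_abs _).trans_le (hfbdd _ b _)
  have hY_int (b : Fin m) : Integrable (fun ω => f (X ω) b (U ω)) P :=
    .of_bound ((hfb b).comp (hX.prodMk hU)).aestronglyMeasurable C (hf_bound b)
  have hcounterfactual (b : Fin m) :
      ∫ ω in E, f (X ω) b (U ω) ∂P = ∫ ω in E, μreg b (X ω) ∂P := by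
    subst hE
    exact setIntegral_counterfactual_eq_of_condExp_ae_eq hX hU hA hNUC (hπmeas a) (hπ01 a) (hπ a)
      (hfb b) (hY_int b) (hμmeas b)
      (condExp_counterfactual_ae_eq hX hU hA hNUC (hπmeas b) (hπ01 b) (hπ b) (hpos b) (hfb b)
        (hY_int b) (fun ω h => by rw [h]) (hμmeas b) (hμ b)) h𝒳'
  have hW : Measurable[MeasurableSpace.comap (fun ω => (X ω, A ω, U ω)) inferInstance]
      fun ω => (X ω, A ω, U ω) := .of_comap_le le_rfl
  have hE_meas :
      MeasurableSet[MeasurableSpace.comap (fun ω => (X ω, A ω, U ω)) inferInstance] E :=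
    ⟨_, h𝒳'.prod ((measurableSet_singleton a).prod .univ), by ext ω; simp [hE, and_comm]⟩
  have hrandom (b : Fin m) :
      ∫ ω in E, (if Astar ω = b then (1 : ℝ) else 0) * f (X ω) b (U ω) ∂P
        = 1 / m * ∫ ω in E, f (X ω) b (U ω) ∂P :=
    setIntegral_mul_eq_mul_setIntegral_of_condExp_ae_eq_const (hX.prodMk (hA.prodMk hU)).comap_le
      (integrable_ite_eq_one_zero hAstar b) (hπstar b)
      (hf.comp (hW.fst.prodMk (measurable_const.prodMk hW.snd.snd))).stronglyMeasurable
      (hf_bound b) hE_meas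
  rw [setIntegral_comp_eq_sum_setIntegral_ite_mul hAstar hY_int, Finset.sum_div, Finset.mul_sum]
  refine Finset.sum_congr rfl fun b _ => ?_
  rw [hrandom, hcounterfactual, mul_div_assoc]

/-- Identification of the performance-above-random-replacement parameter. -/
theorem identification_random_replacement
    {Ω 𝒳 𝒰 : Type*} [MeasurableSpace Ω] [StandardBorelSpace Ω]
    [MeasurableSpace 𝒳] [StandardBorelSpace 𝒳]
    [MeasurableSpace 𝒰] [StandardBorelSpace 𝒰]
    (P : Measure Ω) [IsProbabilityMeasure P]
    (m : ℕ) (hm : 1 ≤ m)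
    (X : Ω → 𝒳) (U : Ω → 𝒰) (A : Ω → Fin m)
    (hX : Measurable X) (hU : Measurable U) (hA : Measurable A)
    (f : 𝒳 → Fin m → 𝒰 → ℝ)
    (hf : Measurable fun p : 𝒳 × Fin m × 𝒰 => f p.1 p.2.1 p.2.2)
    (C : ℝ) (hfbdd : ∀ x b u, |f x b u| ≤ C)
    -- propensity scores: π(b|X) is a version of E[1{A=b} | σ(X)]
    (π : Fin m → 𝒳 → ℝ) (hπmeas : ∀ b, Measurable (π b))
    (hπ01 : ∀ b x, 0 ≤ π b x ∧ π b x ≤ 1)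
    (hπ : ∀ b, (fun ω => π b (X ω)) =ᵐ[P]
      P[fun ω => (if A ω = b then (1 : ℝ) else 0) | MeasurableSpace.comap X inferInstance])
    -- outcome regression: μ(b,X)·π(b|X) is a version of E[1{A=b}·Y | σ(X)]
    (μreg : Fin m → 𝒳 → ℝ) (hμmeas : ∀ b, Measurable (μreg b))
    (Cμ : ℝ) (hμbdd : ∀ b x, |μreg b x| ≤ Cμ)
    (hμ : ∀ b, (fun ω => μreg b (X ω) * π b (X ω)) =ᵐ[P]
      P[fun ω => (if A ω = b then (1 : ℝ) else 0) * f (X ω) (A ω) (U ω) |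
        MeasurableSpace.comap X inferInstance])
    -- no unmeasured confounding: A ⫫ U | σ(X)
    (hNUC : CondIndepFun (MeasurableSpace.comap X inferInstance) hX.comap_le A U P)
    -- positivity: every player has positive propensity almost surely
    (hpos : ∀ b : Fin m, ∀ᵐ ω ∂P, 0 < π b (X ω))
    -- uniform stochastic intervention: (1/m) is a version of E[1{A*=b} | σ(X, A, U)]
    (Astar : Ω → Fin m) (hAstar : Measurable Astar)
    (hπstar : ∀ b : Fin m, (fun _ => (1 : ℝ) / m) =ᵐ[P]
      P[fun ω => (if Astar ω = b then (1 : ℝ) else 0) |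
        MeasurableSpace.comap (fun ω => (X ω, A ω, U ω)) inferInstance])
    -- focal player and reference population
    (a : Fin m) (𝒳' : Set 𝒳) (h𝒳' : MeasurableSet 𝒳')
    (E : Set Ω) (hE : E = {ω | A ω = a} ∩ {ω | X ω ∈ 𝒳'})
    (hPE : 0 < P E) :
    (∫ ω in E, f (X ω) (Astar ω) (U ω) ∂P) / (P E).toReal
      = (1 / m) * ∑ b : Fin m,
          (∫ ω in E, μreg b (X ω) ∂P) / (P E).toReal :=
  identification_random_replacement_general P m X U A hX hU hA f hf C hfbdd π hπmeas hπ01 hπ μreg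
    hμmeas hμ hNUC hpos Astar hAstar hπstar a 𝒳' h𝒳' E hE
end

section
/- Conditional mean of counterfactual outcomes: Assume no unmeasured confounding. Then for every b ∈ Fin m, π(b|X)·E[f(X, b, U) | σ(X)] = π(b|X)·μ(b, X) P-a.s. In particular, if π(b|X) > 0 P-a.s., then E[f(X, b, U) | σ(X)] = μ(b, X) P-a.s.; that is, the outcome regression μ(b, X) is a version of the conditional mean of the counterfactual outcome Y(b) given X. -/
/-!
No unmeasured confounding means that learning `U` in addition to `X` does not change the
conditional law of `A`, so `E[1{A=b} | X, U] = π(b|X)`. The counterfactual `Y(b)` is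
`σ(X, U)`-measurable and `1{A=b} Y = 1{A=b} Y(b)`, so the tower property followed by pulling
out `Y(b)` gives `μ(b,X) π(b|X) = E[1{A=b} Y(b) | X] = π(b|X) E[Y(b) | X]`.
-/

open MeasureTheory ProbabilityTheory

theorem ProbabilityTheory.CondIndepFun.condExp_preimage_sup_ae_eq
    {Ω β γ δ : Type*} [MeasurableSpace Ω] [StandardBorelSpace Ω]
    [MeasurableSpace β] [StandardBorelSpace β] [Nonempty β]
    [MeasurableSpace γ] [StandardBorelSpace γ] [Nonempty γ] [MeasurableSpace δ]
    {μ : Measure Ω} [IsFiniteMeasure μ] {Y : Ω → β} {Z : Ω → γ} {W : Ω → δ}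
    (hY : Measurable Y) (hZ : Measurable Z) (hW : Measurable W)
    (h : CondIndepFun (MeasurableSpace.comap W inferInstance) hW.comap_le Y Z μ)
    {s : Set β} (hs : MeasurableSet s) :
    μ⟦Y ⁻¹' s | (MeasurableSpace.comap W inferInstance ⊔ MeasurableSpace.comap Z inferInstance)⟧
      =ᵐ[μ] μ⟦Y ⁻¹' s | MeasurableSpace.comap W inferInstance⟧ := by
  have hWZ := hW.prodMk hZ
  have h_kernel := ae_of_ae_map hWZ.aemeasurable
    ((condIndepFun_iff_condDistrib_prod_ae_eq_prodMkRight hY hZ hW).1 h.symm)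
  rw [← MeasurableSpace.comap_prodMk]
  filter_upwards [condDistrib_ae_eq_condExp (μ := μ) hWZ hY hs,
    condDistrib_ae_eq_condExp (μ := μ) hW hY hs, h_kernel] with ω hWZω hWω hω
  rw [hω, Kernel.prodMkRight_apply, hWω] at hWZω
  exact hWZω.symm

theorem condExp_mul_ae_eq_of_condExp_ae_eq
    {Ω : Type*} {m m' mΩ : MeasurableSpace Ω} {μ : Measure Ω} [IsFiniteMeasure μ]
    (hm : m ≤ m') (hm' : m' ≤ mΩ) {φ g : Ω → ℝ} (hφ : Integrable φ μ)
    (hg : StronglyMeasurable[m'] g) {C : ℝ} (hgC : ∀ᵐ ω ∂μ, ‖g ω‖ ≤ C)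
    (hφm : μ[φ | m'] =ᵐ[μ] μ[φ | m]) :
    μ[φ * g | m] =ᵐ[μ] μ[φ | m] * μ[g | m] := by
  have hg_int : Integrable g μ := .of_bound (hg.mono hm').aestronglyMeasurable C hgC
  calc μ[φ * g | m]
      =ᵐ[μ] μ[μ[φ * g | m'] | m] := (condExp_condExp_of_le hm hm').symm
    _ =ᵐ[μ] μ[μ[φ | m'] * g | m] := condExp_congr_ae
        (by simpa only [mul_comm] using condExp_stronglyMeasurable_mul_of_bound hm' hg hφ C hgC)
    _ =ᵐ[μ] μ[μ[φ | m] * g | m] := condExp_congr_ae (hφm.mul .rfl)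
    _ =ᵐ[μ] μ[φ | m] * μ[g | m] := condExp_mul_of_stronglyMeasurable_left stronglyMeasurable_condExp
        (integrable_condExp.mul_bdd hg_int.aestronglyMeasurable hgC) hg_int

theorem ProbabilityTheory.CondIndepFun.condExp_indicator_mul_ae_eq
    {Ω β γ δ : Type*} [MeasurableSpace Ω] [StandardBorelSpace Ω]
    [MeasurableSpace β] [StandardBorelSpace β] [Nonempty β]
    [MeasurableSpace γ] [StandardBorelSpace γ] [Nonempty γ] [MeasurableSpace δ]
    {μ : Measure Ω} [IsFiniteMeasure μ] {Y : Ω → β} {Z : Ω → γ} {W : Ω → δ}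
    (hY : Measurable Y) (hZ : Measurable Z) (hW : Measurable W)
    (h : CondIndepFun (MeasurableSpace.comap W inferInstance) hW.comap_le Y Z μ)
    {s : Set β} (hs : MeasurableSet s) {g : δ × γ → ℝ} (hg : Measurable g) {C : ℝ}
    (hgC : ∀ p, |g p| ≤ C) :
    μ[(Y ⁻¹' s).indicator (fun _ => 1) * (fun ω => g (W ω, Z ω)) |
        MeasurableSpace.comap W inferInstance]
      =ᵐ[μ] μ⟦Y ⁻¹' s | MeasurableSpace.comap W inferInstance⟧ *
        μ[fun ω => g (W ω, Z ω) | MeasurableSpace.comap W inferInstance] := by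
  have hg_sup : StronglyMeasurable[MeasurableSpace.comap W inferInstance ⊔
      MeasurableSpace.comap Z inferInstance] fun ω => g (W ω, Z ω) := by
    rw [← MeasurableSpace.comap_prodMk]
    exact (hg.comp (comap_measurable _)).stronglyMeasurable
  exact condExp_mul_ae_eq_of_condExp_ae_eq le_sup_left (sup_le hW.comap_le hZ.comap_le)
    ((integrable_const 1).indicator (hY hs)) hg_sup (.of_forall fun ω => hgC _)
    (h.condExp_preimage_sup_ae_eq hY hZ hW hs)

theorem condMean_counterfactual_general
    {Ω 𝒳 𝒰 : Type*} [MeasurableSpace Ω] [StandardBorelSpace Ω]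
    [MeasurableSpace 𝒳]
    [MeasurableSpace 𝒰] [StandardBorelSpace 𝒰]
    (P : Measure Ω) [IsProbabilityMeasure P]
    (m : ℕ) (hm : 1 ≤ m)
    (X : Ω → 𝒳) (U : Ω → 𝒰) (A : Ω → Fin m)
    (hX : Measurable X) (hU : Measurable U) (hA : Measurable A)
    (f : 𝒳 → Fin m → 𝒰 → ℝ)
    (hf : Measurable fun p : 𝒳 × Fin m × 𝒰 => f p.1 p.2.1 p.2.2)
    (C : ℝ) (hfbdd : ∀ x b u, |f x b u| ≤ C)
    -- propensity scores: π(b|X) is a version of E[1{A=b} | σ(X)]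
    (π : Fin m → 𝒳 → ℝ)
    (hπ : ∀ b, (fun ω => π b (X ω)) =ᵐ[P]
      P[fun ω => (if A ω = b then (1 : ℝ) else 0) | MeasurableSpace.comap X inferInstance])
    -- outcome regression: μ(b,X)·π(b|X) is a version of E[1{A=b}·Y | σ(X)]
    (μreg : Fin m → 𝒳 → ℝ)
    (hμ : ∀ b, (fun ω => μreg b (X ω) * π b (X ω)) =ᵐ[P]
      P[fun ω => (if A ω = b then (1 : ℝ) else 0) * f (X ω) (A ω) (U ω) |
        MeasurableSpace.comap X inferInstance])
    -- no unmeasured confounding: A ⫫ U | σ(X)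
    (hNUC : CondIndepFun (MeasurableSpace.comap X inferInstance) hX.comap_le A U P) :
    (∀ b : Fin m,
      (fun ω => π b (X ω) *
          (P[fun ω' => f (X ω') b (U ω') | MeasurableSpace.comap X inferInstance]) ω)
        =ᵐ[P] (fun ω => π b (X ω) * μreg b (X ω)))
    ∧ (∀ b : Fin m, (∀ᵐ ω ∂P, 0 < π b (X ω)) →
        P[fun ω' => f (X ω') b (U ω') | MeasurableSpace.comap X inferInstance]
          =ᵐ[P] (fun ω => μreg b (X ω))) := by
  have : Nonempty (Fin m) := ⟨⟨0, hm⟩⟩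
  have : Nonempty 𝒰 := (nonempty_of_isProbabilityMeasure P).map U
  have key : ∀ b : Fin m,
      (fun ω => π b (X ω) *
          (P[fun ω' => f (X ω') b (U ω') | MeasurableSpace.comap X inferInstance]) ω)
        =ᵐ[P] (fun ω => π b (X ω) * μreg b (X ω)) := by
    intro b
    have h_ind :
        (fun ω => if A ω = b then (1 : ℝ) else 0) = (A ⁻¹' {b}).indicator fun _ => 1 := by
      funext ω; simp [Set.indicator]
    have h_obs : (fun ω => (if A ω = b then (1 : ℝ) else 0) * f (X ω) (A ω) (U ω))
        = (A ⁻¹' {b}).indicator (fun _ => 1) * fun ω => f (X ω) b (U ω) := by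
      funext ω; by_cases hAω : A ω = b <;> simp [Set.indicator, hAω]
    have h_factor := hNUC.condExp_indicator_mul_ae_eq hA hU hX (.singleton b)
      (g := fun p => f p.1 b p.2) (hf.comp (measurable_fst.prodMk
        (measurable_const.prodMk measurable_snd))) (fun p => hfbdd p.1 b p.2)
    filter_upwards [h_ind ▸ hπ b, h_obs ▸ hμ b, h_factor] with ω hπω hμω hω
    calc π b (X ω) * P[fun ω' => f (X ω') b (U ω') | MeasurableSpace.comap X inferInstance] ω
        = P[((A ⁻¹' {b}).indicator fun _ => 1) * fun ω' => f (X ω') b (U ω') |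
            MeasurableSpace.comap X inferInstance] ω := by rw [hω, hπω, Pi.mul_apply]
      _ = π b (X ω) * μreg b (X ω) := by rw [← hμω, mul_comm]
  refine ⟨key, fun b hpos => ?_⟩
  filter_upwards [key b, hpos] with ω hω hπω
  exact mul_left_cancel₀ hπω.ne' hω

/-- Conditional mean of counterfactual outcomes: under no unmeasured confounding,
`π(b|X) · E[f(X, b, U) | σ(X)] = π(b|X) · μ(b, X)` almost surely; in particular, if
`π(b|X) > 0` a.s., then `μ(b, X)` is a version of `E[f(X, b, U) | σ(X)]`. -/
theorem condMean_counterfactual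
    {Ω 𝒳 𝒰 : Type*} [MeasurableSpace Ω] [StandardBorelSpace Ω]
    [MeasurableSpace 𝒳] [StandardBorelSpace 𝒳]
    [MeasurableSpace 𝒰] [StandardBorelSpace 𝒰]
    (P : Measure Ω) [IsProbabilityMeasure P]
    (m : ℕ) (hm : 1 ≤ m)
    (X : Ω → 𝒳) (U : Ω → 𝒰) (A : Ω → Fin m)
    (hX : Measurable X) (hU : Measurable U) (hA : Measurable A)
    (f : 𝒳 → Fin m → 𝒰 → ℝ)
    (hf : Measurable fun p : 𝒳 × Fin m × 𝒰 => f p.1 p.2.1 p.2.2)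
    (C : ℝ) (hfbdd : ∀ x b u, |f x b u| ≤ C)
    -- propensity scores: π(b|X) is a version of E[1{A=b} | σ(X)]
    (π : Fin m → 𝒳 → ℝ) (hπmeas : ∀ b, Measurable (π b))
    (hπ01 : ∀ b x, 0 ≤ π b x ∧ π b x ≤ 1)
    (hπ : ∀ b, (fun ω => π b (X ω)) =ᵐ[P]
      P[fun ω => (if A ω = b then (1 : ℝ) else 0) | MeasurableSpace.comap X inferInstance])
    -- outcome regression: μ(b,X)·π(b|X) is a version of E[1{A=b}·Y | σ(X)]
    (μreg : Fin m → 𝒳 → ℝ) (hμmeas : ∀ b, Measurable (μreg b))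
    (Cμ : ℝ) (hμbdd : ∀ b x, |μreg b x| ≤ Cμ)
    (hμ : ∀ b, (fun ω => μreg b (X ω) * π b (X ω)) =ᵐ[P]
      P[fun ω => (if A ω = b then (1 : ℝ) else 0) * f (X ω) (A ω) (U ω) |
        MeasurableSpace.comap X inferInstance])
    -- no unmeasured confounding: A ⫫ U | σ(X)
    (hNUC : CondIndepFun (MeasurableSpace.comap X inferInstance) hX.comap_le A U P) :
    (∀ b : Fin m,
      (fun ω => π b (X ω) *
          (P[fun ω' => f (X ω') b (U ω') | MeasurableSpace.comap X inferInstance]) ω)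
        =ᵐ[P] (fun ω => π b (X ω) * μreg b (X ω)))
    ∧ (∀ b : Fin m, (∀ᵐ ω ∂P, 0 < π b (X ω)) →
        P[fun ω' => f (X ω') b (U ω') | MeasurableSpace.comap X inferInstance]
          =ᵐ[P] (fun ω => μreg b (X ω))) :=
  condMean_counterfactual_general P m hm X U A hX hU hA f hf C hfbdd π hπ μreg hμ hNUC
end

section
/- von Mises (exact first-order) expansion for the random replacement component parameter: θ_P − θ_F = E_P[D_F] + R(P, F), where E_P denotes expectation under P and R(P, F) is the second-order remainder defined in the context. -/
open MeasureTheory ProbabilityTheory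

private lemma integrable_of_abs_bound {Ω : Type*} [MeasurableSpace Ω] (P : Measure Ω)
    [IsFiniteMeasure P] {f : Ω → ℝ} (hf : Measurable f) (C : ℝ) (h : ∀ ω, |f ω| ≤ C) :
    Integrable f P :=
  ⟨hf.aestronglyMeasurable, HasFiniteIntegral.of_bounded (C := C)
    (Filter.Eventually.of_forall (by simpa using h))⟩

private lemma abs_mul_le' {x y cx cy : ℝ} (hx : |x| ≤ cx) (hy : |y| ≤ cy) : |x * y| ≤ cx * cy := by
  rw [abs_mul]
  exact mul_le_mul hx hy (abs_nonneg _) ((abs_nonneg _).trans hx)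

private lemma ratio_abs_le' {u v ε : ℝ} (hε : 0 < ε) (hu0 : 0 ≤ u) (hu1 : u ≤ 1) (hv : ε ≤ v) :
    |u / v| ≤ 1 / ε := by
  rw [abs_of_nonneg (div_nonneg hu0 (hε.le.trans hv))]
  exact div_le_div₀ zero_le_one hu1 hε hv

private lemma key_swap {Ω 𝒳 : Type*} [MeasurableSpace Ω] [MeasurableSpace 𝒳]
    (P : Measure Ω) [IsProbabilityMeasure P] {X : Ω → 𝒳} (hX : Measurable X)
    {g : 𝒳 → ℝ} (hg : Measurable g) (Cg : ℝ) (hgb : ∀ x, |g x| ≤ Cg)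
    {h : Ω → ℝ} (hh : Measurable h) (Ch : ℝ) (hhb : ∀ ω, |h ω| ≤ Ch)
    {c : 𝒳 → ℝ}
    (hce : (fun ω => c (X ω)) =ᵐ[P] P[h | MeasurableSpace.comap X inferInstance]) :
    ∫ ω, g (X ω) * h ω ∂P = ∫ ω, g (X ω) * c (X ω) ∂P := by
  have hm : MeasurableSpace.comap X inferInstance ≤ ‹MeasurableSpace Ω› := hX.comap_le
  have hXm : @Measurable Ω 𝒳 (MeasurableSpace.comap X inferInstance) _ X :=
    Measurable.of_comap_le le_rfl
  have hgsm : @StronglyMeasurable Ω ℝ _ (MeasurableSpace.comap X inferInstance)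
      fun ω => g (X ω) :=
    (hg.comp hXm).stronglyMeasurable
  have hhint : Integrable h P := integrable_of_abs_bound P hh Ch hhb
  have hprod : Integrable (fun ω => g (X ω) * h ω) P :=
    integrable_of_abs_bound P ((hg.comp hX).mul hh) (Cg * Ch)
      (fun ω => abs_mul_le' (hgb _) (hhb _))
  have h1 := condExp_mul_of_stronglyMeasurable_left (μ := P) (m := MeasurableSpace.comap X inferInstance) hgsm hprod hhint
  calc ∫ ω, g (X ω) * h ω ∂P
      = ∫ ω, (P[fun ω => g (X ω) * h ω | MeasurableSpace.comap X inferInstance]) ω ∂P := (integral_condExp hm).symm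
    _ = ∫ ω, g (X ω) * c (X ω) ∂P := by
        refine integral_congr_ae ?_
        filter_upwards [h1, hce] with ω h1ω h2ω
        simp only [Pi.mul_apply] at h1ω
        rw [h2ω]
        exact h1ω


open MeasureTheory ProbabilityTheory

/-- von Mises (exact first-order) expansion for the random replacement component parameter:
`θ_P − θ_F = E_P[D_F] + R(P, F)`. -/
theorem vonMises_expansion_random_replacement
    {Ω 𝒳 : Type*} [MeasurableSpace Ω] [StandardBorelSpace Ω]
    [MeasurableSpace 𝒳] [StandardBorelSpace 𝒳]
    (P F : Measure Ω) [IsProbabilityMeasure P] [IsProbabilityMeasure F]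
    (m : ℕ) (hm : 1 ≤ m)
    (X : Ω → 𝒳) (A : Ω → Fin m) (Y : Ω → ℝ)
    (hX : Measurable X) (hA : Measurable A) (hY : Measurable Y)
    (hY01 : ∀ ω, 0 ≤ Y ω ∧ Y ω ≤ 1)
    (a a' : Fin m) (ε : ℝ) (hε : 0 < ε) (hε1 : ε ≤ 1)
    (hPa : 0 < P {ω | A ω = a}) (hFa : 0 < F {ω | A ω = a})
    -- propensity scores under P and F, for b ∈ {a, a'}
    (πP πF : Fin m → 𝒳 → ℝ)
    (hπPmeas : ∀ b ∈ ({a, a'} : Set (Fin m)), Measurable (πP b))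
    (hπPrange : ∀ b ∈ ({a, a'} : Set (Fin m)), ∀ x, ε ≤ πP b x ∧ πP b x ≤ 1)
    (hπP : ∀ b ∈ ({a, a'} : Set (Fin m)), (fun ω => πP b (X ω)) =ᵐ[P]
      P[fun ω => (if A ω = b then (1 : ℝ) else 0) | MeasurableSpace.comap X inferInstance])
    (hπFmeas : ∀ b ∈ ({a, a'} : Set (Fin m)), Measurable (πF b))
    (hπFrange : ∀ b ∈ ({a, a'} : Set (Fin m)), ∀ x, ε ≤ πF b x ∧ πF b x ≤ 1)
    (hπF : ∀ b ∈ ({a, a'} : Set (Fin m)), (fun ω => πF b (X ω)) =ᵐ[F]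
      F[fun ω => (if A ω = b then (1 : ℝ) else 0) | MeasurableSpace.comap X inferInstance])
    -- outcome regressions under P and F
    (μP μF : 𝒳 → ℝ)
    (hμPmeas : Measurable μP) (hμPrange : ∀ x, 0 ≤ μP x ∧ μP x ≤ 1)
    (hμP : (fun ω => μP (X ω) * πP a' (X ω)) =ᵐ[P]
      P[fun ω => (if A ω = a' then (1 : ℝ) else 0) * Y ω | MeasurableSpace.comap X inferInstance])
    (hμFmeas : Measurable μF) (hμFrange : ∀ x, 0 ≤ μF x ∧ μF x ≤ 1)
    (hμF : (fun ω => μF (X ω) * πF a' (X ω)) =ᵐ[F]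
      F[fun ω => (if A ω = a' then (1 : ℝ) else 0) * Y ω | MeasurableSpace.comap X inferInstance])
    -- parameters
    (θP θF : ℝ)
    (hθP : θP = (∫ ω, μP (X ω) * (if A ω = a then (1 : ℝ) else 0) ∂P)
      / (P {ω | A ω = a}).toReal)
    (hθF : θF = (∫ ω, μF (X ω) * (if A ω = a then (1 : ℝ) else 0) ∂F)
      / (F {ω | A ω = a}).toReal)
    -- efficient influence function at F
    (DF : Ω → ℝ)
    (hDF : ∀ ω, DF ω =
      (if A ω = a' then (1 : ℝ) else 0) / (F {ω' | A ω' = a}).toReal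
        * (πF a (X ω) / πF a' (X ω)) * (Y ω - μF (X ω))
      + (if A ω = a then (1 : ℝ) else 0) / (F {ω' | A ω' = a}).toReal * (μF (X ω) - θF))
    -- second-order remainder
    (R : ℝ)
    (hR : R = (∫ ω, πF a (X ω) / (F {ω' | A ω' = a}).toReal
        * (πP a' (X ω) / πF a' (X ω) - πP a (X ω) / πF a (X ω))
        * (μF (X ω) - μP (X ω)) ∂P)
      + ((P {ω | A ω = a}).toReal / (F {ω | A ω = a}).toReal - 1) * (θF - θP)) :
    θP - θF = (∫ ω, DF ω ∂P) + R := by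
  have haM : a ∈ ({a, a'} : Set (Fin m)) := Set.mem_insert _ _
  have ha'M : a' ∈ ({a, a'} : Set (Fin m)) := Set.mem_insert_iff.mpr (Or.inr rfl)
  set p : ℝ := (P {ω | A ω = a}).toReal with hpdef
  set f : ℝ := (F {ω' | A ω' = a}).toReal with hfdef
  have hp : 0 < p := ENNReal.toReal_pos hPa.ne' (measure_ne_top _ _)
  -- basic measurability
  have hSa : MeasurableSet {ω | A ω = a} := hA (measurableSet_singleton a)
  have hind : ∀ (b : Fin m), Measurable fun ω => if A ω = b then (1 : ℝ) else 0 :=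
    fun b => Measurable.ite (hA (measurableSet_singleton b)) measurable_const measurable_const
  have hindb : ∀ (b : Fin m) ω, |if A ω = b then (1 : ℝ) else 0| ≤ 1 := by
    intro b ω; split_ifs <;> norm_num
  have hrmeas : Measurable fun x => πF a x / πF a' x :=
    (hπFmeas a haM).div (hπFmeas a' ha'M)
  have hrb : ∀ x, |πF a x / πF a' x| ≤ 1 / ε := fun x =>
    ratio_abs_le' hε (hε.le.trans (hπFrange a haM x).1) (hπFrange a haM x).2 (hπFrange a' ha'M x).1
  have hμFb : ∀ x, |μF x| ≤ 1 := fun x => abs_le.mpr ⟨by linarith [(hμFrange x).1], (hμFrange x).2⟩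
  have hμPb : ∀ x, |μP x| ≤ 1 := fun x => abs_le.mpr ⟨by linarith [(hμPrange x).1], (hμPrange x).2⟩
  have hπPb : ∀ b (hb : b ∈ ({a, a'} : Set (Fin m))) x, |πP b x| ≤ 1 := fun b hb x =>
    abs_le.mpr ⟨by linarith [(hπPrange b hb x).1], (hπPrange b hb x).2⟩
  have hπFb : ∀ b (hb : b ∈ ({a, a'} : Set (Fin m))) x, |πF b x| ≤ 1 := fun b hb x =>
    abs_le.mpr ⟨by linarith [(hπFrange b hb x).1], (hπFrange b hb x).2⟩
  have hYb : ∀ ω, |Y ω| ≤ 1 := fun ω => abs_le.mpr ⟨by linarith [(hY01 ω).1], (hY01 ω).2⟩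
  -- indicator integral
  have hIa : ∫ ω, (if A ω = a then (1 : ℝ) else 0) ∂P = p := by
    have h1 : ∀ ω, (if A ω = a then (1 : ℝ) else 0)
        = Set.indicator {ω' | A ω' = a} (fun _ => (1 : ℝ)) ω := by
      intro ω; rw [Set.indicator_apply]; rfl
    rw [integral_congr_ae (Filter.Eventually.of_forall h1), hpdef]
    exact integral_indicator_one hSa
  -- conditional-expectation swap identities under P
  have K1 : ∫ ω, πF a (X ω) / πF a' (X ω) * ((if A ω = a' then (1 : ℝ) else 0) * Y ω) ∂P
      = ∫ ω, πF a (X ω) / πF a' (X ω) * (μP (X ω) * πP a' (X ω)) ∂P :=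
    key_swap (c := fun x => μP x * πP a' x) P hX hrmeas (1 / ε) hrb ((hind a').mul hY) 1
      (fun ω => by simpa using abs_mul_le' (hindb a' ω) (hYb ω)) hμP
  have K2 : ∫ ω, (πF a (X ω) / πF a' (X ω) * μF (X ω)) * (if A ω = a' then (1 : ℝ) else 0) ∂P
      = ∫ ω, (πF a (X ω) / πF a' (X ω) * μF (X ω)) * πP a' (X ω) ∂P :=
    key_swap P hX (hrmeas.mul hμFmeas) (1 / ε * 1)
      (fun x => abs_mul_le' (hrb x) (hμFb x)) (hind a') 1 (hindb a') (c := πP a') (hπP a' ha'M)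
  have K3 : ∫ ω, μF (X ω) * (if A ω = a then (1 : ℝ) else 0) ∂P
      = ∫ ω, μF (X ω) * πP a (X ω) ∂P :=
    key_swap (c := πP a) P hX hμFmeas 1 hμFb (hind a) 1 (hindb a) (hπP a haM)
  have K4 : ∫ ω, μP (X ω) * (if A ω = a then (1 : ℝ) else 0) ∂P
      = ∫ ω, μP (X ω) * πP a (X ω) ∂P :=
    key_swap (c := πP a) P hX hμPmeas 1 hμPb (hind a) 1 (hindb a) (hπP a haM)
  -- the parameter identity
  have E4 : ∫ ω, μP (X ω) * πP a (X ω) ∂P = θP * p := by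
    rw [← K4, hθP, div_mul_cancel₀ _ hp.ne']
  -- integrability of all pieces
  have it1 : Integrable (fun ω =>
      πF a (X ω) / πF a' (X ω) * ((if A ω = a' then (1 : ℝ) else 0) * Y ω)) P :=
    integrable_of_abs_bound P ((hrmeas.comp hX).mul ((hind a').mul hY)) (1 / ε * (1 * 1))
      (fun ω => abs_mul_le' (hrb _) (abs_mul_le' (hindb a' ω) (hYb ω)))
  have it2 : Integrable (fun ω =>
      (πF a (X ω) / πF a' (X ω) * μF (X ω)) * (if A ω = a' then (1 : ℝ) else 0)) P :=
    integrable_of_abs_bound P (((hrmeas.comp hX).mul (hμFmeas.comp hX)).mul (hind a'))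
      (1 / ε * 1 * 1)
      (fun ω => abs_mul_le' (abs_mul_le' (hrb _) (hμFb _)) (hindb a' ω))
  have it3 : Integrable (fun ω => μF (X ω) * (if A ω = a then (1 : ℝ) else 0)) P :=
    integrable_of_abs_bound P ((hμFmeas.comp hX).mul (hind a)) (1 * 1)
      (fun ω => abs_mul_le' (hμFb _) (hindb a ω))
  have it4 : Integrable (fun ω => θF * (if A ω = a then (1 : ℝ) else 0)) P :=
    integrable_of_abs_bound P (measurable_const.mul (hind a)) (|θF| * 1)
      (fun ω => abs_mul_le' le_rfl (hindb a ω))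
  have iA1 : Integrable (fun ω => πF a (X ω) / πF a' (X ω) * (μP (X ω) * πP a' (X ω))) P :=
    integrable_of_abs_bound P
      ((hrmeas.comp hX).mul ((hμPmeas.comp hX).mul ((hπPmeas a' ha'M).comp hX)))
      (1 / ε * (1 * 1))
      (fun ω => abs_mul_le' (hrb _) (abs_mul_le' (hμPb _) (hπPb a' ha'M _)))
  have iA2 : Integrable (fun ω => (πF a (X ω) / πF a' (X ω) * μF (X ω)) * πP a' (X ω)) P :=
    integrable_of_abs_bound P
      (((hrmeas.comp hX).mul (hμFmeas.comp hX)).mul ((hπPmeas a' ha'M).comp hX))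
      (1 / ε * 1 * 1)
      (fun ω => abs_mul_le' (abs_mul_le' (hrb _) (hμFb _)) (hπPb a' ha'M _))
  have iA3 : Integrable (fun ω => μF (X ω) * πP a (X ω)) P :=
    integrable_of_abs_bound P ((hμFmeas.comp hX).mul ((hπPmeas a haM).comp hX)) (1 * 1)
      (fun ω => abs_mul_le' (hμFb _) (hπPb a haM _))
  have hqd : ∀ x, |πP a' x / πF a' x - πP a x / πF a x| ≤ 1 / ε + 1 / ε := fun x =>
    (abs_sub _ _).trans (add_le_add
      (ratio_abs_le' hε (hε.le.trans (hπPrange a' ha'M x).1) (hπPrange a' ha'M x).2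
        (hπFrange a' ha'M x).1)
      (ratio_abs_le' hε (hε.le.trans (hπPrange a haM x).1) (hπPrange a haM x).2
        (hπFrange a haM x).1))
  have hdd : ∀ x, |μF x - μP x| ≤ 1 + 1 := fun x =>
    (abs_sub _ _).trans (add_le_add (hμFb x) (hμPb x))
  have iA5 : Integrable (fun ω => πF a (X ω) * (πP a' (X ω) / πF a' (X ω)
      - πP a (X ω) / πF a (X ω)) * (μF (X ω) - μP (X ω))) P :=
    integrable_of_abs_bound P
      ((((hπFmeas a haM).comp hX).mul
        ((((hπPmeas a' ha'M).comp hX).div ((hπFmeas a' ha'M).comp hX)).sub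
          (((hπPmeas a haM).comp hX).div ((hπFmeas a haM).comp hX)))).mul
        ((hμFmeas.comp hX).sub (hμPmeas.comp hX)))
      (1 * (1 / ε + 1 / ε) * (1 + 1))
      (fun ω => abs_mul_le' (abs_mul_le' (hπFb a haM _) (hqd _)) (hdd _))
  -- expansion of ∫ DF
  have EDF : ∫ ω, DF ω ∂P = f⁻¹ *
      ((∫ ω, πF a (X ω) / πF a' (X ω) * (μP (X ω) * πP a' (X ω)) ∂P)
        - (∫ ω, (πF a (X ω) / πF a' (X ω) * μF (X ω)) * πP a' (X ω) ∂P)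
        + (∫ ω, μF (X ω) * πP a (X ω) ∂P) - θF * p) := by
    calc ∫ ω, DF ω ∂P
        = ∫ ω, f⁻¹ *
            (πF a (X ω) / πF a' (X ω) * ((if A ω = a' then (1 : ℝ) else 0) * Y ω)
            - (πF a (X ω) / πF a' (X ω) * μF (X ω)) * (if A ω = a' then (1 : ℝ) else 0)
            + μF (X ω) * (if A ω = a then (1 : ℝ) else 0)
            - θF * (if A ω = a then (1 : ℝ) else 0)) ∂P := by
          refine integral_congr_ae (Filter.Eventually.of_forall fun ω => ?_)
          rw [hDF ω]; ring
      _ = f⁻¹ * ∫ ω,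
            (πF a (X ω) / πF a' (X ω) * ((if A ω = a' then (1 : ℝ) else 0) * Y ω)
            - (πF a (X ω) / πF a' (X ω) * μF (X ω)) * (if A ω = a' then (1 : ℝ) else 0)
            + μF (X ω) * (if A ω = a then (1 : ℝ) else 0)
            - θF * (if A ω = a then (1 : ℝ) else 0)) ∂P := integral_const_mul _ _
      _ = f⁻¹ *
          ((∫ ω, πF a (X ω) / πF a' (X ω) * (μP (X ω) * πP a' (X ω)) ∂P)
            - (∫ ω, (πF a (X ω) / πF a' (X ω) * μF (X ω)) * πP a' (X ω) ∂P)
            + (∫ ω, μF (X ω) * πP a (X ω) ∂P) - θF * p) := by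
          have it12 : Integrable (fun ω =>
              πF a (X ω) / πF a' (X ω) * ((if A ω = a' then (1 : ℝ) else 0) * Y ω)
              - (πF a (X ω) / πF a' (X ω) * μF (X ω)) * (if A ω = a' then (1 : ℝ) else 0)) P :=
            it1.sub it2
          have it123 : Integrable (fun ω =>
              πF a (X ω) / πF a' (X ω) * ((if A ω = a' then (1 : ℝ) else 0) * Y ω)
              - (πF a (X ω) / πF a' (X ω) * μF (X ω)) * (if A ω = a' then (1 : ℝ) else 0)
              + μF (X ω) * (if A ω = a then (1 : ℝ) else 0)) P := it12.add it3
          rw [integral_sub it123 it4, integral_add it12 it3,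
            integral_sub it1 it2, integral_const_mul, K1, K2, K3, hIa]
  -- expansion of R
  have ER : R = f⁻¹ * (∫ ω, πF a (X ω) * (πP a' (X ω) / πF a' (X ω)
        - πP a (X ω) / πF a (X ω)) * (μF (X ω) - μP (X ω)) ∂P)
      + (p / f - 1) * (θF - θP) := by
    rw [hR]
    congr 1
    calc ∫ ω, πF a (X ω) / f * (πP a' (X ω) / πF a' (X ω) - πP a (X ω) / πF a (X ω))
          * (μF (X ω) - μP (X ω)) ∂P
        = ∫ ω, f⁻¹ * (πF a (X ω) * (πP a' (X ω) / πF a' (X ω) - πP a (X ω) / πF a (X ω))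
            * (μF (X ω) - μP (X ω))) ∂P := by
          refine integral_congr_ae (Filter.Eventually.of_forall fun ω => ?_); ring
      _ = f⁻¹ * ∫ ω, πF a (X ω) * (πP a' (X ω) / πF a' (X ω) - πP a (X ω) / πF a (X ω))
            * (μF (X ω) - μP (X ω)) ∂P := integral_const_mul _ _
  -- combining the integrals
  have EC : (∫ ω, πF a (X ω) / πF a' (X ω) * (μP (X ω) * πP a' (X ω)) ∂P)
      - (∫ ω, (πF a (X ω) / πF a' (X ω) * μF (X ω)) * πP a' (X ω) ∂P)
      + (∫ ω, μF (X ω) * πP a (X ω) ∂P)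
      + (∫ ω, πF a (X ω) * (πP a' (X ω) / πF a' (X ω) - πP a (X ω) / πF a (X ω))
          * (μF (X ω) - μP (X ω)) ∂P)
      = ∫ ω, μP (X ω) * πP a (X ω) ∂P := by
    have h12 : Integrable (fun ω =>
        πF a (X ω) / πF a' (X ω) * (μP (X ω) * πP a' (X ω))
        - (πF a (X ω) / πF a' (X ω) * μF (X ω)) * πP a' (X ω)) P := iA1.sub iA2
    have h123 : Integrable (fun ω =>
        πF a (X ω) / πF a' (X ω) * (μP (X ω) * πP a' (X ω))
        - (πF a (X ω) / πF a' (X ω) * μF (X ω)) * πP a' (X ω)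
        + μF (X ω) * πP a (X ω)) P := h12.add iA3
    have hsum : ∫ ω, (πF a (X ω) / πF a' (X ω) * (μP (X ω) * πP a' (X ω))
        - (πF a (X ω) / πF a' (X ω) * μF (X ω)) * πP a' (X ω)
        + μF (X ω) * πP a (X ω)
        + πF a (X ω) * (πP a' (X ω) / πF a' (X ω) - πP a (X ω) / πF a (X ω))
            * (μF (X ω) - μP (X ω))) ∂P
        = (∫ ω, πF a (X ω) / πF a' (X ω) * (μP (X ω) * πP a' (X ω)) ∂P)
          - (∫ ω, (πF a (X ω) / πF a' (X ω) * μF (X ω)) * πP a' (X ω) ∂P)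
          + (∫ ω, μF (X ω) * πP a (X ω) ∂P)
          + (∫ ω, πF a (X ω) * (πP a' (X ω) / πF a' (X ω) - πP a (X ω) / πF a (X ω))
              * (μF (X ω) - μP (X ω)) ∂P) := by
      rw [integral_add h123 iA5, integral_add h12 iA3, integral_sub iA1 iA2]
    rw [← hsum]
    refine integral_congr_ae (Filter.Eventually.of_forall fun ω => ?_)
    have h0 : πF a (X ω) ≠ 0 := (hε.trans_le (hπFrange a haM (X ω)).1).ne'
    have h0' : πF a' (X ω) ≠ 0 := (hε.trans_le (hπFrange a' ha'M (X ω)).1).ne'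
    field_simp
    ring
  rw [EDF, ER]
  linear_combination (-(f⁻¹)) * EC - f⁻¹ * E4
end

section
/- First intermediate identity in the von Mises expansion: let D_{P,F} be D_F with θ_F replaced by θ_P, i.e. D_{P,F} = (1{A=a'}/F(A=a))·(π_F(a|X)/π_F(a'|X))·(Y − μ_F(X)) + (1{A=a}/F(A=a))·(μ_F(X) − θ_P). Then E_P[D_{P,F}] = E_P[(π_F(a|X)/F(A=a))·(π_P(a'|X)/π_F(a'|X) − π_P(a|X)/π_F(a|X))·(μ_P(X) − μ_F(X))]. -/
/-! Conditioning on `X` replaces `1{A = b}` by `π_P(b|X)` and `1{A = a'}·Y` by `μ_P(X)·π_P(a'|X)`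
inside any expectation against a bounded function of `X` (tower property). This turns the
weighted residual term of `D_{P,F}` into `E_P[(π_F(a|X)/π_F(a'|X))·π_P(a'|X)·(μ_P − μ_F)(X)]`;
since `θ_P·P(A=a) = E_P[μ_P(X)·1{A=a}]`, the centered term becomes `E_P[π_P(a|X)·(μ_F − μ_P)(X)]`. -/

open MeasureTheory

section PullOut

variable {Ω : Type*} {m mΩ : MeasurableSpace Ω} {μ : Measure Ω} [IsFiniteMeasure μ]

theorem integral_mul_eq_of_ae_eq_condExp (hm : m ≤ mΩ) {f g h : Ω → ℝ}
    (hf : StronglyMeasurable[m] f) {C : ℝ} (hfC : ∀ᵐ ω ∂μ, ‖f ω‖ ≤ C) (hg : Integrable g μ)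
    (hh : h =ᵐ[μ] μ[g|m]) : ∫ ω, f ω * g ω ∂μ = ∫ ω, f ω * h ω ∂μ :=
  calc ∫ ω, f ω * g ω ∂μ = ∫ ω, (μ[f * g|m]) ω ∂μ := (integral_condExp hm).symm
    _ = ∫ ω, f ω * h ω ∂μ := integral_congr_ae <|
        (condExp_stronglyMeasurable_mul_of_bound hm hf hg C hfC).trans (.mul .rfl hh.symm)

end PullOut

section Indicator

variable {Ω α : Type*} [MeasurableSpace Ω] [MeasurableSpace α] [MeasurableSingletonClass α]
  [DecidableEq α] {μ : Measure Ω} {A : Ω → α}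

theorem integrable_ite_eq [IsFiniteMeasure μ] (hA : Measurable A) (b : α) :
    Integrable (fun ω => if A ω = b then (1 : ℝ) else 0) μ :=
  .of_bound (Measurable.ite (hA (measurableSet_singleton b)) measurable_const
    measurable_const).aestronglyMeasurable 1 (.of_forall fun ω => by split_ifs <;> simp)

theorem integral_ite_eq (hA : Measurable A) (b : α) :
    ∫ ω, (if A ω = b then (1 : ℝ) else 0) ∂μ = μ.real {ω | A ω = b} := by
  rw [← integral_indicator_one (s := {ω | A ω = b}) (hA (measurableSet_singleton b))]
  congr 1 with ω
  simp [Set.indicator_apply]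

end Indicator

section ConditionalOnCovariate

variable {Ω 𝒳 : Type*} [MeasurableSpace Ω] [MeasurableSpace 𝒳] {P : Measure Ω} {X : Ω → 𝒳}
  {g h : Ω → ℝ} {v : 𝒳 → ℝ} {C : ℝ}

theorem MeasureTheory.Integrable.bdd_comp_mul (hX : Measurable X) (hv : Measurable v)
    (hvC : ∀ x, ‖v x‖ ≤ C) (hg : Integrable g P) : Integrable (fun ω => v (X ω) * g ω) P :=
  hg.bdd_mul (hv.comp hX).aestronglyMeasurable (.of_forall fun ω => hvC (X ω))

variable [IsFiniteMeasure P]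

theorem integral_comp_mul_eq_of_ae_eq_condExp_comap (hX : Measurable X) (hv : Measurable v)
    (hvC : ∀ x, ‖v x‖ ≤ C) (hg : Integrable g P)
    (hh : h =ᵐ[P] P[g|MeasurableSpace.comap X inferInstance]) :
    ∫ ω, v (X ω) * g ω ∂P = ∫ ω, v (X ω) * h ω ∂P :=
  integral_mul_eq_of_ae_eq_condExp hX.comap_le
    (hv.comp (comap_measurable X)).stronglyMeasurable (.of_forall fun ω => hvC (X ω)) hg hh

theorem integral_weighted_residual_eq {Y : Ω → ℝ} {p r w u : 𝒳 → ℝ} {D : ℝ}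
    (hX : Measurable X) (hg : Integrable g P) (hgY : Integrable (fun ω => g ω * Y ω) P)
    (hw : Measurable w) (hwC : ∀ x, ‖w x‖ ≤ C) (hu : Measurable u) (huD : ∀ x, ‖u x‖ ≤ D)
    (hp : (fun ω => p (X ω)) =ᵐ[P] P[g|MeasurableSpace.comap X inferInstance])
    (hr : (fun ω => r (X ω) * p (X ω)) =ᵐ[P]
      P[fun ω => g ω * Y ω|MeasurableSpace.comap X inferInstance]) :
    ∫ ω, w (X ω) * (g ω * (Y ω - u (X ω))) ∂P
      = ∫ ω, w (X ω) * (p (X ω) * (r (X ω) - u (X ω))) ∂P := by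
  have hwu_meas : Measurable fun x => w x * u x := hw.mul hu
  have hwu : ∀ x, ‖w x * u x‖ ≤ C * D := fun x => norm_mul_le_of_le (hwC x) (huD x)
  have hp_int : Integrable (fun ω => p (X ω)) P := integrable_condExp.congr hp.symm
  have hr_int : Integrable (fun ω => r (X ω) * p (X ω)) P := integrable_condExp.congr hr.symm
  calc ∫ ω, w (X ω) * (g ω * (Y ω - u (X ω))) ∂P
      = ∫ ω, (w (X ω) * (g ω * Y ω) - w (X ω) * u (X ω) * g ω) ∂P := by
        congr 1 with ω; ring
    _ = ∫ ω, w (X ω) * (g ω * Y ω) ∂P - ∫ ω, w (X ω) * u (X ω) * g ω ∂P :=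
        integral_sub (hgY.bdd_comp_mul hX hw hwC) (hg.bdd_comp_mul hX hwu_meas hwu)
    _ = ∫ ω, w (X ω) * (r (X ω) * p (X ω)) ∂P - ∫ ω, w (X ω) * u (X ω) * p (X ω) ∂P := by
        rw [integral_comp_mul_eq_of_ae_eq_condExp_comap hX hw hwC hgY hr,
          integral_comp_mul_eq_of_ae_eq_condExp_comap hX hwu_meas hwu hg hp]
    _ = ∫ ω, w (X ω) * (p (X ω) * (r (X ω) - u (X ω))) ∂P := by
        rw [← integral_sub (hr_int.bdd_comp_mul hX hw hwC) (hp_int.bdd_comp_mul hX hwu_meas hwu)]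
        congr 1 with ω; ring

theorem integral_centered_eq {p r u : 𝒳 → ℝ} {D θ : ℝ}
    (hX : Measurable X) (hg : Integrable g P) (hg0 : ∫ ω, g ω ∂P ≠ 0)
    (hr : Measurable r) (hrC : ∀ x, ‖r x‖ ≤ C) (hu : Measurable u) (huD : ∀ x, ‖u x‖ ≤ D)
    (hp : (fun ω => p (X ω)) =ᵐ[P] P[g|MeasurableSpace.comap X inferInstance])
    (hθ : θ = (∫ ω, r (X ω) * g ω ∂P) / ∫ ω, g ω ∂P) :
    ∫ ω, (u (X ω) - θ) * g ω ∂P = ∫ ω, (u (X ω) - r (X ω)) * p (X ω) ∂P := by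
  have hp_int : Integrable (fun ω => p (X ω)) P := integrable_condExp.congr hp.symm
  calc ∫ ω, (u (X ω) - θ) * g ω ∂P = ∫ ω, (u (X ω) * g ω - θ * g ω) ∂P := by
        congr 1 with ω; ring
    _ = ∫ ω, u (X ω) * g ω ∂P - ∫ ω, r (X ω) * g ω ∂P := by
        rw [integral_sub (hg.bdd_comp_mul hX hu huD) (hg.const_mul θ), integral_const_mul, hθ,
          div_mul_cancel₀ _ hg0]
    _ = ∫ ω, u (X ω) * p (X ω) ∂P - ∫ ω, r (X ω) * p (X ω) ∂P := by
        rw [integral_comp_mul_eq_of_ae_eq_condExp_comap hX hu huD hg hp,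
          integral_comp_mul_eq_of_ae_eq_condExp_comap hX hr hrC hg hp]
    _ = ∫ ω, (u (X ω) - r (X ω)) * p (X ω) ∂P := by
        rw [← integral_sub (hp_int.bdd_comp_mul hX hu huD) (hp_int.bdd_comp_mul hX hr hrC)]
        congr 1 with ω; ring

theorem integral_weighted_residual_add_centered_eq {g' Y : Ω → ℝ} {p p' r u w : 𝒳 → ℝ}
    {D R θ : ℝ} (hX : Measurable X) (hg : Integrable g P) (hg0 : ∫ ω, g ω ∂P ≠ 0)
    (hg' : Integrable g' P) (hg'Y : Integrable (fun ω => g' ω * Y ω) P)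
    (hw : Measurable w) (hwC : ∀ x, ‖w x‖ ≤ C) (hu : Measurable u) (huD : ∀ x, ‖u x‖ ≤ D)
    (hr : Measurable r) (hrR : ∀ x, ‖r x‖ ≤ R)
    (hp : (fun ω => p (X ω)) =ᵐ[P] P[g|MeasurableSpace.comap X inferInstance])
    (hp' : (fun ω => p' (X ω)) =ᵐ[P] P[g'|MeasurableSpace.comap X inferInstance])
    (hr' : (fun ω => r (X ω) * p' (X ω)) =ᵐ[P]
      P[fun ω => g' ω * Y ω|MeasurableSpace.comap X inferInstance])
    (hθ : θ = (∫ ω, r (X ω) * g ω ∂P) / ∫ ω, g ω ∂P) :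
    ∫ ω, (w (X ω) * (g' ω * (Y ω - u (X ω))) + (u (X ω) - θ) * g ω) ∂P
      = ∫ ω, (w (X ω) * (p' (X ω) * (r (X ω) - u (X ω))) + (u (X ω) - r (X ω)) * p (X ω)) ∂P := by
  have hp_int : Integrable (fun ω => p (X ω)) P := integrable_condExp.congr hp.symm
  have hp'_int : Integrable (fun ω => p' (X ω)) P := integrable_condExp.congr hp'.symm
  have hresidual : Integrable (fun ω => g' ω * (Y ω - u (X ω))) P :=
    (hg'Y.sub (hg'.mul_bdd (hu.comp hX).aestronglyMeasurable (.of_forall fun ω => huD _))).congr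
      (.of_forall fun ω => (mul_sub _ _ _).symm)
  have hfitted : Integrable (fun ω => p' (X ω) * (r (X ω) - u (X ω))) P :=
    hp'_int.mul_bdd ((hr.comp hX).sub (hu.comp hX)).aestronglyMeasurable
      (.of_forall fun ω => norm_sub_le_of_le (hrR _) (huD _))
  have hsub : Measurable fun x => u x - r x := hu.sub hr
  rw [integral_add (hresidual.bdd_comp_mul hX hw hwC)
      (hg.bdd_comp_mul hX (hu.sub_const θ) fun x => norm_sub_le_of_le (huD x) le_rfl),
    integral_add (hfitted.bdd_comp_mul hX hw hwC)
      (hp_int.bdd_comp_mul hX hsub fun x => norm_sub_le_of_le (huD x) (hrR x)),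
    integral_weighted_residual_eq hX hg' hg'Y hw hwC hu huD hp' hr',
    integral_centered_eq hX hg hg0 hr hrR hu huD hp hθ]

end ConditionalOnCovariate

theorem vonMises_first_intermediate_identity_general
    {Ω 𝒳 : Type*} [MeasurableSpace Ω] [MeasurableSpace 𝒳]
    (P F : Measure Ω) [IsProbabilityMeasure P] (m : ℕ)
    (X : Ω → 𝒳) (A : Ω → Fin m) (Y : Ω → ℝ)
    (hX : Measurable X) (hA : Measurable A) (hY : Measurable Y)
    (hY01 : ∀ ω, 0 ≤ Y ω ∧ Y ω ≤ 1)
    (a a' : Fin m) (ε : ℝ) (hε : 0 < ε)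
    (hPa : 0 < P {ω | A ω = a})
    -- propensity scores under P and F, for b ∈ {a, a'}
    (πP πF : Fin m → 𝒳 → ℝ)
    (hπP : ∀ b ∈ ({a, a'} : Set (Fin m)), (fun ω => πP b (X ω)) =ᵐ[P]
      P[fun ω => (if A ω = b then (1 : ℝ) else 0) | MeasurableSpace.comap X inferInstance])
    (hπFmeas : ∀ b ∈ ({a, a'} : Set (Fin m)), Measurable (πF b))
    (hπFrange : ∀ b ∈ ({a, a'} : Set (Fin m)), ∀ x, ε ≤ πF b x ∧ πF b x ≤ 1)
    -- outcome regressions under P and F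
    (μP μF : 𝒳 → ℝ)
    (hμPmeas : Measurable μP) (hμPrange : ∀ x, 0 ≤ μP x ∧ μP x ≤ 1)
    (hμP : (fun ω => μP (X ω) * πP a' (X ω)) =ᵐ[P]
      P[fun ω => (if A ω = a' then (1 : ℝ) else 0) * Y ω | MeasurableSpace.comap X inferInstance])
    (hμFmeas : Measurable μF) (hμFrange : ∀ x, 0 ≤ μF x ∧ μF x ≤ 1)
    -- parameters
    (θP : ℝ)
    (hθP : θP = (∫ ω, μP (X ω) * (if A ω = a then (1 : ℝ) else 0) ∂P)
      / (P {ω | A ω = a}).toReal)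
    -- D_{P,F}: the EIF at F with θ_F replaced by θ_P
    (DPF : Ω → ℝ)
    (hDPF : ∀ ω, DPF ω =
      (if A ω = a' then (1 : ℝ) else 0) / (F {ω' | A ω' = a}).toReal
        * (πF a (X ω) / πF a' (X ω)) * (Y ω - μF (X ω))
      + (if A ω = a then (1 : ℝ) else 0) / (F {ω' | A ω' = a}).toReal * (μF (X ω) - θP)) :
    (∫ ω, DPF ω ∂P)
      = ∫ ω, πF a (X ω) / (F {ω' | A ω' = a}).toReal
          * (πP a' (X ω) / πF a' (X ω) - πP a (X ω) / πF a (X ω))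
          * (μP (X ω) - μF (X ω)) ∂P := by
  have ha : a ∈ ({a, a'} : Set (Fin m)) := .inl rfl
  have ha' : a' ∈ ({a, a'} : Set (Fin m)) := .inr rfl
  have hunit : ∀ {s : ℝ}, 0 ≤ s ∧ s ≤ 1 → ‖s‖ ≤ 1 := fun hs => abs_le.2 ⟨by linarith [hs.1], hs.2⟩
  have hw : ∀ x, ‖πF a x / πF a' x‖ ≤ 1 / ε := fun x => by
    rw [Real.norm_of_nonneg (div_nonneg (hε.le.trans (hπFrange a ha x).1)
      (hε.le.trans (hπFrange a' ha' x).1))]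
    exact div_le_div₀ zero_le_one (hπFrange a ha x).2 hε (hπFrange a' ha' x).1
  have hPa_real : ∫ ω, (if A ω = a then (1 : ℝ) else 0) ∂P ≠ 0 := by
    rw [integral_ite_eq hA]
    exact (ENNReal.toReal_pos hPa.ne' (measure_ne_top P _)).ne'
  have hidentity := integral_weighted_residual_add_centered_eq (θ := θP)
    (w := fun x => πF a x / πF a' x) hX (integrable_ite_eq hA a)
    hPa_real (integrable_ite_eq hA a')
    ((integrable_ite_eq hA a').mul_bdd hY.aestronglyMeasurable (.of_forall fun ω => hunit (hY01 ω)))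
    ((hπFmeas a ha).div (hπFmeas a' ha')) hw hμFmeas (fun x => hunit (hμFrange x))
    hμPmeas (fun x => hunit (hμPrange x)) (hπP a ha) (hπP a' ha') hμP
    (by rw [hθP, integral_ite_eq hA]; rfl)
  set c := (F {ω' | A ω' = a}).toReal
  calc ∫ ω, DPF ω ∂P
      = c⁻¹ * ∫ ω, (πF a (X ω) / πF a' (X ω) * ((if A ω = a' then 1 else 0) * (Y ω - μF (X ω)))
          + (μF (X ω) - θP) * (if A ω = a then 1 else 0)) ∂P := by
        rw [← integral_const_mul]
        exact integral_congr_ae (.of_forall fun ω => by rw [hDPF]; ring)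
    _ = _ := by
        rw [hidentity, ← integral_const_mul]
        refine integral_congr_ae (.of_forall fun ω => ?_)
        have := (hε.trans_le (hπFrange a ha (X ω)).1).ne'
        field_simp
        ring

/-- First intermediate identity in the von Mises expansion: with `D_{P,F}` equal to `D_F`
with `θ_F` replaced by `θ_P`, one has
`E_P[D_{P,F}] = E_P[(π_F(a|X)/F(A=a))·(π_P(a'|X)/π_F(a'|X) − π_P(a|X)/π_F(a|X))·(μ_P(X) − μ_F(X))]`. -/
theorem vonMises_first_intermediate_identity
    {Ω 𝒳 : Type*} [MeasurableSpace Ω] [StandardBorelSpace Ω]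
    [MeasurableSpace 𝒳] [StandardBorelSpace 𝒳]
    (P F : Measure Ω) [IsProbabilityMeasure P] [IsProbabilityMeasure F]
    (m : ℕ) (hm : 1 ≤ m)
    (X : Ω → 𝒳) (A : Ω → Fin m) (Y : Ω → ℝ)
    (hX : Measurable X) (hA : Measurable A) (hY : Measurable Y)
    (hY01 : ∀ ω, 0 ≤ Y ω ∧ Y ω ≤ 1)
    (a a' : Fin m) (ε : ℝ) (hε : 0 < ε) (hε1 : ε ≤ 1)
    (hPa : 0 < P {ω | A ω = a}) (hFa : 0 < F {ω | A ω = a})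
    -- propensity scores under P and F, for b ∈ {a, a'}
    (πP πF : Fin m → 𝒳 → ℝ)
    (hπPmeas : ∀ b ∈ ({a, a'} : Set (Fin m)), Measurable (πP b))
    (hπPrange : ∀ b ∈ ({a, a'} : Set (Fin m)), ∀ x, ε ≤ πP b x ∧ πP b x ≤ 1)
    (hπP : ∀ b ∈ ({a, a'} : Set (Fin m)), (fun ω => πP b (X ω)) =ᵐ[P]
      P[fun ω => (if A ω = b then (1 : ℝ) else 0) | MeasurableSpace.comap X inferInstance])
    (hπFmeas : ∀ b ∈ ({a, a'} : Set (Fin m)), Measurable (πF b))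
    (hπFrange : ∀ b ∈ ({a, a'} : Set (Fin m)), ∀ x, ε ≤ πF b x ∧ πF b x ≤ 1)
    (hπF : ∀ b ∈ ({a, a'} : Set (Fin m)), (fun ω => πF b (X ω)) =ᵐ[F]
      F[fun ω => (if A ω = b then (1 : ℝ) else 0) | MeasurableSpace.comap X inferInstance])
    -- outcome regressions under P and F
    (μP μF : 𝒳 → ℝ)
    (hμPmeas : Measurable μP) (hμPrange : ∀ x, 0 ≤ μP x ∧ μP x ≤ 1)
    (hμP : (fun ω => μP (X ω) * πP a' (X ω)) =ᵐ[P]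
      P[fun ω => (if A ω = a' then (1 : ℝ) else 0) * Y ω | MeasurableSpace.comap X inferInstance])
    (hμFmeas : Measurable μF) (hμFrange : ∀ x, 0 ≤ μF x ∧ μF x ≤ 1)
    (hμF : (fun ω => μF (X ω) * πF a' (X ω)) =ᵐ[F]
      F[fun ω => (if A ω = a' then (1 : ℝ) else 0) * Y ω | MeasurableSpace.comap X inferInstance])
    -- parameters
    (θP θF : ℝ)
    (hθP : θP = (∫ ω, μP (X ω) * (if A ω = a then (1 : ℝ) else 0) ∂P)
      / (P {ω | A ω = a}).toReal)
    (hθF : θF = (∫ ω, μF (X ω) * (if A ω = a then (1 : ℝ) else 0) ∂F)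
      / (F {ω | A ω = a}).toReal)
    -- D_{P,F}: the EIF at F with θ_F replaced by θ_P
    (DPF : Ω → ℝ)
    (hDPF : ∀ ω, DPF ω =
      (if A ω = a' then (1 : ℝ) else 0) / (F {ω' | A ω' = a}).toReal
        * (πF a (X ω) / πF a' (X ω)) * (Y ω - μF (X ω))
      + (if A ω = a then (1 : ℝ) else 0) / (F {ω' | A ω' = a}).toReal * (μF (X ω) - θP)) :
    (∫ ω, DPF ω ∂P)
      = ∫ ω, πF a (X ω) / (F {ω' | A ω' = a}).toReal
          * (πP a' (X ω) / πF a' (X ω) - πP a (X ω) / πF a (X ω))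
          * (μP (X ω) - μF (X ω)) ∂P :=
  vonMises_first_intermediate_identity_general P F m X A Y hX hA hY hY01 a a' ε hε hPa πP πF hπP
    hπFmeas hπFrange μP μF hμPmeas hμPrange hμP hμFmeas hμFrange θP hθP DPF hDPF
end

section
/- Mean-zero property of the efficient influence function of the random replacement component parameter: E_P[D_P] = 0, where D_P = (1{A=a'}/P(A=a))·(π_P(a|X)/π_P(a'|X))·(Y − μ_P(X)) + (1{A=a}/P(A=a))·(μ_P(X) − θ_P). -/
/-!
With `c = P(A = a)` and the σ(X)-measurable bounded weight `w = π_P(a|X) / π_P(a'|X)`,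
`c • D_P = w · R + 1{A=a} (μ_P(X) - θ_P)`, where `R = 1{A=a'} Y - μ_P(X) 1{A=a'}`.
The defining property of `μ_P` says `E[1{A=a'} Y | X] = μ_P(X) E[1{A=a'} | X]`, i.e. `E[R | X] = 0`,
so `E[w R] = E[w E[R | X]] = 0`. The second term has mean zero because `θ_P` is exactly the
`1{A=a}`-weighted average of `μ_P(X)`.
-/

open MeasureTheory ProbabilityTheory

lemma norm_div_le_one_div_of_le {x y ε : ℝ} (hε : 0 < ε) (hx₀ : 0 ≤ x) (hx₁ : x ≤ 1)
    (hy : ε ≤ y) : ‖x / y‖ ≤ 1 / ε := by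
  rw [Real.norm_of_nonneg (div_nonneg hx₀ (hε.le.trans hy))]
  exact div_le_div₀ zero_le_one hx₁ hε hy

namespace MeasureTheory

variable {Ω : Type*} {m m₀ : MeasurableSpace Ω} {μ : Measure[m₀] Ω}

lemma condExp_sub_mul_ae_eq_zero {h u v : Ω → ℝ} (hh : StronglyMeasurable[m] h)
    (hu : Integrable u μ) (hv : Integrable v μ) (hhu : Integrable (h * u) μ)
    (hcond : μ[v | m] =ᵐ[μ] h * μ[u | m]) : μ[v - h * u | m] =ᵐ[μ] 0 := by
  filter_upwards [condExp_sub hv hhu m, condExp_mul_of_stronglyMeasurable_left hh hhu hu, hcond]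
    with ω hsub hpull hvω
  simp [hsub, hpull, hvω]

lemma integral_mul_eq_zero_of_condExp_ae_eq_zero (hm : m ≤ m₀) [SigmaFinite (μ.trim hm)]
    {f g : Ω → ℝ} (hf : StronglyMeasurable[m] f) (hfg : Integrable (f * g) μ)
    (hg : Integrable g μ) (hcond : μ[g | m] =ᵐ[μ] 0) : ∫ ω, f ω * g ω ∂μ = 0 :=
  calc ∫ ω, f ω * g ω ∂μ = ∫ ω, (μ[f * g | m]) ω ∂μ := (integral_condExp hm).symm
    _ = ∫ _, (0 : ℝ) ∂μ := integral_congr_ae <| by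
        filter_upwards [condExp_mul_of_stronglyMeasurable_left hf hfg hg, hcond] with ω h1 h2
        simp [h1, h2]
    _ = 0 := integral_zero _ _

lemma integral_mul_sub_mul_eq_zero_of_condExp_eq_mul (hm : m ≤ m₀) [IsFiniteMeasure μ]
    {w h u v : Ω → ℝ} {C : ℝ} (hw : StronglyMeasurable[m] w) (hwC : ∀ ω, ‖w ω‖ ≤ C)
    (hh : StronglyMeasurable[m] h) (hu : Integrable u μ) (hv : Integrable v μ)
    (hhu : Integrable (h * u) μ) (hcond : μ[v | m] =ᵐ[μ] h * μ[u | m]) :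
    ∫ ω, w ω * (v ω - h ω * u ω) ∂μ = 0 :=
  integral_mul_eq_zero_of_condExp_ae_eq_zero hm hw
    ((hv.sub hhu).bdd_mul (hw.mono hm).aestronglyMeasurable (ae_of_all _ hwC)) (hv.sub hhu)
    (condExp_sub_mul_ae_eq_zero hh hu hv hhu hcond)

lemma integral_mul_sub_weighted_average_eq_zero {e g : Ω → ℝ} (he : Integrable e μ)
    (hge : Integrable (fun ω => g ω * e ω) μ) (he0 : ∫ ω, e ω ∂μ ≠ 0) :
    ∫ ω, e ω * (g ω - (∫ ω, g ω * e ω ∂μ) / ∫ ω, e ω ∂μ) ∂μ = 0 := by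
  simp_rw [mul_sub]
  rw [integral_sub (by simpa only [mul_comm] using hge) (he.mul_const _), integral_mul_const]
  simp_rw [mul_comm (e _)]
  field_simp
  ring

lemma integral_ite_eq_measureReal {α : Type*} [MeasurableSpace α] [MeasurableSingletonClass α]
    [DecidableEq α] {A : Ω → α} (hA : Measurable A) (b : α) :
    ∫ ω, (if A ω = b then (1 : ℝ) else 0) ∂μ = μ.real {ω | A ω = b} := by
  rw [← integral_indicator_one (s := {ω | A ω = b}) (hA (measurableSet_singleton b))]
  congr with ω
  simp [Set.indicator_apply]

end MeasureTheory

theorem eif_mean_zero_random_replacement_general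
    {Ω 𝒳 : Type*} [MeasurableSpace Ω]
    [MeasurableSpace 𝒳]
    (P : Measure Ω) [IsProbabilityMeasure P]
    (m : ℕ)
    (X : Ω → 𝒳) (A : Ω → Fin m) (Y : Ω → ℝ)
    (hX : Measurable X) (hA : Measurable A) (hY : Measurable Y)
    (hY01 : ∀ ω, 0 ≤ Y ω ∧ Y ω ≤ 1)
    (a a' : Fin m) (ε : ℝ) (hε : 0 < ε)
    (hPa : 0 < P {ω | A ω = a})
    -- propensity scores, for b ∈ {a, a'}
    (πP : Fin m → 𝒳 → ℝ)
    (hπPmeas : ∀ b ∈ ({a, a'} : Set (Fin m)), Measurable (πP b))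
    (hπPrange : ∀ b ∈ ({a, a'} : Set (Fin m)), ∀ x, ε ≤ πP b x ∧ πP b x ≤ 1)
    (hπP : ∀ b ∈ ({a, a'} : Set (Fin m)), (fun ω => πP b (X ω)) =ᵐ[P]
      P[fun ω => (if A ω = b then (1 : ℝ) else 0) | MeasurableSpace.comap X inferInstance])
    -- outcome regression
    (μP : 𝒳 → ℝ)
    (hμPmeas : Measurable μP) (hμPrange : ∀ x, 0 ≤ μP x ∧ μP x ≤ 1)
    (hμP : (fun ω => μP (X ω) * πP a' (X ω)) =ᵐ[P]
      P[fun ω => (if A ω = a' then (1 : ℝ) else 0) * Y ω | MeasurableSpace.comap X inferInstance])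
    -- parameter
    (θP : ℝ)
    (hθP : θP = (∫ ω, μP (X ω) * (if A ω = a then (1 : ℝ) else 0) ∂P)
      / (P {ω | A ω = a}).toReal)
    -- efficient influence function at P
    (DP : Ω → ℝ)
    (hDP : ∀ ω, DP ω =
      (if A ω = a' then (1 : ℝ) else 0) / (P {ω' | A ω' = a}).toReal
        * (πP a (X ω) / πP a' (X ω)) * (Y ω - μP (X ω))
      + (if A ω = a then (1 : ℝ) else 0) / (P {ω' | A ω' = a}).toReal * (μP (X ω) - θP)) :
    (∫ ω, DP ω ∂P) = 0 := by
  set ind : Fin m → Ω → ℝ := fun b ω => if A ω = b then 1 else 0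
  set μX : Ω → ℝ := fun ω => μP (X ω)
  set w : Ω → ℝ := fun ω => πP a (X ω) / πP a' (X ω)
  have hind_meas (b : Fin m) : Measurable (ind b) :=
    measurable_const.ite (hA (measurableSet_singleton b)) measurable_const
  have hind_mem (b : Fin m) (ω : Ω) : ind b ω ∈ unitInterval := by
    simp only [ind]; split_ifs <;> simp
  have hμX_meas : Measurable μX := hμPmeas.comp hX
  have hunit_int {f : Ω → ℝ} (hf : Measurable f) (h : ∀ ω, f ω ∈ unitInterval) :
      Integrable f P :=
    .of_mem_Icc 0 1 hf.aemeasurable (ae_of_all _ h)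
  have hind_int (b : Fin m) : Integrable (ind b) P := hunit_int (hind_meas b) (hind_mem b)
  have hμX_ind_int (b : Fin m) : Integrable (fun ω => μX ω * ind b ω) P :=
    hunit_int (hμX_meas.mul (hind_meas b)) fun ω =>
      unitInterval.mul_mem (hμPrange (X ω)) (hind_mem b ω)
  have hind_Y_int : Integrable (fun ω => ind a' ω * Y ω) P :=
    hunit_int ((hind_meas a').mul hY) fun ω => unitInterval.mul_mem (hind_mem a' ω) (hY01 ω)
  have hw_meas : Measurable[MeasurableSpace.comap X inferInstance] w :=
    ((hπPmeas a (by simp)).div (hπPmeas a' (by simp))).comp (comap_measurable X)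
  have hw_bound (ω : Ω) : ‖w ω‖ ≤ 1 / ε :=
    have hπa := hπPrange a (by simp) (X ω)
    norm_div_le_one_div_of_le hε (hε.le.trans hπa.1) hπa.2 (hπPrange a' (by simp) (X ω)).1
  have hT1_int : Integrable (fun ω => w ω * (ind a' ω * Y ω - μX ω * ind a' ω)) P :=
    (hind_Y_int.sub (hμX_ind_int a')).bdd_mul
      (hw_meas.mono hX.comap_le le_rfl).aestronglyMeasurable (ae_of_all _ hw_bound)
  have hT2_int : Integrable (fun ω => ind a ω * (μX ω - θP)) P :=
    ((hμX_ind_int a).sub ((hind_int a).mul_const θP)).congr <|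
      .of_forall fun ω => by simp only [Pi.sub_apply]; ring
  have hT1 : ∫ ω, w ω * (ind a' ω * Y ω - μX ω * ind a' ω) ∂P = 0 := by
    refine integral_mul_sub_mul_eq_zero_of_condExp_eq_mul hX.comap_le
      hw_meas.stronglyMeasurable hw_bound (hμPmeas.comp (comap_measurable X)).stronglyMeasurable
      (hind_int a') hind_Y_int (hμX_ind_int a') ?_
    filter_upwards [hμP, hπP a' (by simp)] with ω hv hu
    rw [← hv, Pi.mul_apply, ← hu]
  have hIa : ∫ ω, ind a ω ∂P = (P {ω | A ω = a}).toReal := integral_ite_eq_measureReal hA a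
  have hT2 : ∫ ω, ind a ω * (μX ω - θP) ∂P = 0 := by
    rw [hθP, ← hIa]
    exact integral_mul_sub_weighted_average_eq_zero (hind_int a) (hμX_ind_int a)
      (hIa ▸ ENNReal.toReal_ne_zero.2 ⟨hPa.ne', measure_ne_top P _⟩)
  have hDP_eq : DP = fun ω => (P {ω | A ω = a}).toReal⁻¹ *
      (w ω * (ind a' ω * Y ω - μX ω * ind a' ω) + ind a ω * (μX ω - θP)) := by
    funext ω; rw [hDP ω]; ring
  rw [hDP_eq, integral_const_mul, integral_add hT1_int hT2_int, hT1, hT2, add_zero, mul_zero]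

/-- Mean-zero property of the efficient influence function of the random replacement
component parameter: `E_P[D_P] = 0`. -/
theorem eif_mean_zero_random_replacement
    {Ω 𝒳 : Type*} [MeasurableSpace Ω] [StandardBorelSpace Ω]
    [MeasurableSpace 𝒳] [StandardBorelSpace 𝒳]
    (P : Measure Ω) [IsProbabilityMeasure P]
    (m : ℕ) (hm : 1 ≤ m)
    (X : Ω → 𝒳) (A : Ω → Fin m) (Y : Ω → ℝ)
    (hX : Measurable X) (hA : Measurable A) (hY : Measurable Y)
    (hY01 : ∀ ω, 0 ≤ Y ω ∧ Y ω ≤ 1)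
    (a a' : Fin m) (ε : ℝ) (hε : 0 < ε) (hε1 : ε ≤ 1)
    (hPa : 0 < P {ω | A ω = a})
    -- propensity scores, for b ∈ {a, a'}
    (πP : Fin m → 𝒳 → ℝ)
    (hπPmeas : ∀ b ∈ ({a, a'} : Set (Fin m)), Measurable (πP b))
    (hπPrange : ∀ b ∈ ({a, a'} : Set (Fin m)), ∀ x, ε ≤ πP b x ∧ πP b x ≤ 1)
    (hπP : ∀ b ∈ ({a, a'} : Set (Fin m)), (fun ω => πP b (X ω)) =ᵐ[P]
      P[fun ω => (if A ω = b then (1 : ℝ) else 0) | MeasurableSpace.comap X inferInstance])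
    -- outcome regression
    (μP : 𝒳 → ℝ)
    (hμPmeas : Measurable μP) (hμPrange : ∀ x, 0 ≤ μP x ∧ μP x ≤ 1)
    (hμP : (fun ω => μP (X ω) * πP a' (X ω)) =ᵐ[P]
      P[fun ω => (if A ω = a' then (1 : ℝ) else 0) * Y ω | MeasurableSpace.comap X inferInstance])
    -- parameter
    (θP : ℝ)
    (hθP : θP = (∫ ω, μP (X ω) * (if A ω = a then (1 : ℝ) else 0) ∂P)
      / (P {ω | A ω = a}).toReal)
    -- efficient influence function at P
    (DP : Ω → ℝ)
    (hDP : ∀ ω, DP ω =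
      (if A ω = a' then (1 : ℝ) else 0) / (P {ω' | A ω' = a}).toReal
        * (πP a (X ω) / πP a' (X ω)) * (Y ω - μP (X ω))
      + (if A ω = a then (1 : ℝ) else 0) / (P {ω' | A ω' = a}).toReal * (μP (X ω) - θP)) :
    (∫ ω, DP ω ∂P) = 0 :=
  eif_mean_zero_random_replacement_general P m X A Y hX hA hY hY01 a a' ε hε hPa πP hπPmeas hπPrange
    hπP μP hμPmeas hμPrange hμP θP hθP DP hDP
end

section
/- Double robustness of the remainder in the propensity score: if π_F(a|X) = π_P(a|X) P-a.s., π_F(a'|X) = π_P(a'|X) P-a.s., and F(A=a) = P(A=a), then R(P, F) = 0 (regardless of whether μ_F equals μ_P). -/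
open MeasureTheory ProbabilityTheory

/-- Double robustness of the remainder in the propensity score: if the propensity scores
under `F` agree `P`-a.s. with those under `P` (at `a` and `a'`) and `F(A=a) = P(A=a)`,
then `R(P, F) = 0`, regardless of whether `μ_F` equals `μ_P`. -/
theorem remainder_double_robustness_propensity
    {Ω 𝒳 : Type*} [MeasurableSpace Ω] [StandardBorelSpace Ω]
    [MeasurableSpace 𝒳] [StandardBorelSpace 𝒳]
    (P F : Measure Ω) [IsProbabilityMeasure P] [IsProbabilityMeasure F]
    (m : ℕ) (hm : 1 ≤ m)
    (X : Ω → 𝒳) (A : Ω → Fin m) (Y : Ω → ℝ)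
    (hX : Measurable X) (hA : Measurable A) (hY : Measurable Y)
    (hY01 : ∀ ω, 0 ≤ Y ω ∧ Y ω ≤ 1)
    (a a' : Fin m) (ε : ℝ) (hε : 0 < ε) (hε1 : ε ≤ 1)
    (hPa : 0 < P {ω | A ω = a}) (hFa : 0 < F {ω | A ω = a})
    -- propensity scores under P and F, for b ∈ {a, a'}
    (πP πF : Fin m → 𝒳 → ℝ)
    (hπPmeas : ∀ b ∈ ({a, a'} : Set (Fin m)), Measurable (πP b))
    (hπPrange : ∀ b ∈ ({a, a'} : Set (Fin m)), ∀ x, ε ≤ πP b x ∧ πP b x ≤ 1)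
    (hπP : ∀ b ∈ ({a, a'} : Set (Fin m)), (fun ω => πP b (X ω)) =ᵐ[P]
      P[fun ω => (if A ω = b then (1 : ℝ) else 0) | MeasurableSpace.comap X inferInstance])
    (hπFmeas : ∀ b ∈ ({a, a'} : Set (Fin m)), Measurable (πF b))
    (hπFrange : ∀ b ∈ ({a, a'} : Set (Fin m)), ∀ x, ε ≤ πF b x ∧ πF b x ≤ 1)
    (hπF : ∀ b ∈ ({a, a'} : Set (Fin m)), (fun ω => πF b (X ω)) =ᵐ[F]
      F[fun ω => (if A ω = b then (1 : ℝ) else 0) | MeasurableSpace.comap X inferInstance])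
    -- outcome regressions under P and F
    (μP μF : 𝒳 → ℝ)
    (hμPmeas : Measurable μP) (hμPrange : ∀ x, 0 ≤ μP x ∧ μP x ≤ 1)
    (hμP : (fun ω => μP (X ω) * πP a' (X ω)) =ᵐ[P]
      P[fun ω => (if A ω = a' then (1 : ℝ) else 0) * Y ω | MeasurableSpace.comap X inferInstance])
    (hμFmeas : Measurable μF) (hμFrange : ∀ x, 0 ≤ μF x ∧ μF x ≤ 1)
    (hμF : (fun ω => μF (X ω) * πF a' (X ω)) =ᵐ[F]
      F[fun ω => (if A ω = a' then (1 : ℝ) else 0) * Y ω | MeasurableSpace.comap X inferInstance])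
    -- parameters
    (θP θF : ℝ)
    (hθP : θP = (∫ ω, μP (X ω) * (if A ω = a then (1 : ℝ) else 0) ∂P)
      / (P {ω | A ω = a}).toReal)
    (hθF : θF = (∫ ω, μF (X ω) * (if A ω = a then (1 : ℝ) else 0) ∂F)
      / (F {ω | A ω = a}).toReal)
    -- second-order remainder
    (R : ℝ)
    (hR : R = (∫ ω, πF a (X ω) / (F {ω' | A ω' = a}).toReal
        * (πP a' (X ω) / πF a' (X ω) - πP a (X ω) / πF a (X ω))
        * (μF (X ω) - μP (X ω)) ∂P)
      + ((P {ω | A ω = a}).toReal / (F {ω | A ω = a}).toReal - 1) * (θF - θP))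
    -- the propensity scores under F agree P-a.s. with those under P
    (hagree_a : (fun ω => πF a (X ω)) =ᵐ[P] (fun ω => πP a (X ω)))
    (hagree_a' : (fun ω => πF a' (X ω)) =ᵐ[P] (fun ω => πP a' (X ω)))
    (hFPa : F {ω | A ω = a} = P {ω | A ω = a}) :
    R = 0 := by
  have hint : (∫ ω, πF a (X ω) / (F {ω' | A ω' = a}).toReal
      * (πP a' (X ω) / πF a' (X ω) - πP a (X ω) / πF a (X ω))
      * (μF (X ω) - μP (X ω)) ∂P) = 0 := by
    rw [show (0 : ℝ) = ∫ _ : Ω, (0 : ℝ) ∂P by simp]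
    refine integral_congr_ae ?_
    filter_upwards [hagree_a, hagree_a'] with ω h1 h2
    have hna : πP a (X ω) ≠ 0 :=
      ne_of_gt (lt_of_lt_of_le hε ((hπPrange a (by simp) (X ω)).1))
    have hna' : πP a' (X ω) ≠ 0 :=
      ne_of_gt (lt_of_lt_of_le hε ((hπPrange a' (by simp) (X ω)).1))
    simp only [h1, h2, div_self hna, div_self hna', sub_self, mul_zero, zero_mul]
  rw [hR, hint, hFPa]
  have : (P {ω | A ω = a}).toReal ≠ 0 :=
    ENNReal.toReal_ne_zero.2 ⟨ne_of_gt hPa, measure_ne_top _ _⟩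
  rw [div_self this]
  ring
end

section
/- Cauchy–Schwarz product bound on the leading remainder term: writing ‖g‖ = (E_P[g(X)²])^{1/2} for measurable g : 𝒳 → ℝ, one has |E_P[(π_F(a|X)/F(A=a))·(π_P(a'|X)/π_F(a'|X) − π_P(a|X)/π_F(a|X))·(μ_F(X) − μ_P(X))]| ≤ (1/(ε·F(A=a)))·(‖π_P(a'|·) − π_F(a'|·)‖ + ‖π_P(a|·) − π_F(a|·)‖)·‖μ_F − μ_P‖. In particular, the leading term of the remainder is bounded by a constant times the product of the L²(P) estimation errors of the propensity scores and of the outcome regression. -/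
open MeasureTheory ProbabilityTheory

/-! The propensity-ratio difference is rewritten as
`p'/q' - p/q = (p' - q')/q' - (p - q)/q`; overlap (`q, q' ≥ ε`) and `π_F(a|·) ≤ 1` bound the
integrand pointwise by `(ε F(A=a))⁻¹ (|p' - q'| + |p - q|) |μ_F - μ_P|`, and Cauchy–Schwarz in
`L²(P)` bounds the integral of each of the two products. -/

lemma abs_div_sub_div_le {ε p q p' q' : ℝ} (hε : 0 < ε) (hq : ε ≤ q) (hq' : ε ≤ q') :
    |p' / q' - p / q| ≤ (|p' - q'| + |p - q|) / ε := by
  have hq₀ : 0 < q := hε.trans_le hq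
  have hq'₀ : 0 < q' := hε.trans_le hq'
  have hsplit : p' / q' - p / q = (p' - q') / q' - (p - q) / q := by
    field_simp
    ring
  calc |p' / q' - p / q| ≤ |p' - q'| / q' + |p - q| / q := by
        rw [hsplit]
        refine (abs_sub _ _).trans_eq ?_
        rw [abs_div, abs_div, abs_of_pos hq'₀, abs_of_pos hq₀]
    _ ≤ |p' - q'| / ε + |p - q| / ε := by gcongr
    _ = (|p' - q'| + |p - q|) / ε := by ring

lemma abs_weighted_div_sub_div_mul_le {ε c k p q p' q' g : ℝ} (hε : 0 < ε) (hc : 0 ≤ c)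
    (hk : 0 ≤ k ∧ k ≤ 1) (hq : ε ≤ q) (hq' : ε ≤ q') :
    |k / c * (p' / q' - p / q) * g| ≤ 1 / (ε * c) * ((|p' - q'| + |p - q|) * |g|) := by
  have hkc : |k / c| ≤ 1 / c := by
    rw [abs_div, abs_of_nonneg hk.1, abs_of_nonneg hc]
    gcongr
    exact hk.2
  calc |k / c * (p' / q' - p / q) * g|
      = |k / c| * |p' / q' - p / q| * |g| := by rw [abs_mul, abs_mul]
    _ ≤ 1 / c * ((|p' - q'| + |p - q|) / ε) * |g| := by
        gcongr
        exact abs_div_sub_div_le hε hq hq'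
    _ = 1 / (ε * c) * ((|p' - q'| + |p - q|) * |g|) := by ring

section CauchySchwarz

variable {α : Type*} [MeasurableSpace α] {μ : Measure α}

lemma integral_abs_mul_abs_le_sqrt_mul_sqrt {f g : α → ℝ} (hf : MemLp f 2 μ) (hg : MemLp g 2 μ) :
    ∫ x, |f x| * |g x| ∂μ ≤ √(∫ x, f x ^ 2 ∂μ) * √(∫ x, g x ^ 2 ∂μ) := by
  have h := integral_mul_norm_le_Lp_mul_Lq Real.HolderConjugate.two_two
    (by simpa using hf) (by simpa using hg)
  simpa [Real.sqrt_eq_rpow, Real.rpow_two, sq_abs] using h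

lemma abs_integral_le_mul_sqrt_add_sqrt_mul_sqrt {f u v w : α → ℝ} {C : ℝ} (hC : 0 ≤ C)
    (hu : MemLp u 2 μ) (hv : MemLp v 2 μ) (hw : MemLp w 2 μ)
    (hbound : ∀ᵐ x ∂μ, |f x| ≤ C * ((|u x| + |v x|) * |w x|)) :
    |∫ x, f x ∂μ| ≤ C * (√(∫ x, u x ^ 2 ∂μ) + √(∫ x, v x ^ 2 ∂μ)) * √(∫ x, w x ^ 2 ∂μ) := by
  have huw : Integrable (fun x => |u x| * |w x|) μ := hu.norm.integrable_mul hw.norm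
  have hvw : Integrable (fun x => |v x| * |w x|) μ := hv.norm.integrable_mul hw.norm
  calc |∫ x, f x ∂μ| ≤ ∫ x, |f x| ∂μ := abs_integral_le_integral_abs
    _ ≤ ∫ x, C * ((|u x| + |v x|) * |w x|) ∂μ := by
        refine integral_mono_of_nonneg (ae_of_all _ fun x => abs_nonneg _) ?_ hbound
        simpa only [add_mul, Pi.add_apply] using (huw.add hvw).const_mul C
    _ = C * (∫ x, |u x| * |w x| ∂μ + ∫ x, |v x| * |w x| ∂μ) := by
        simp only [add_mul]
        rw [integral_const_mul, integral_add huw hvw]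
    _ ≤ C * (√(∫ x, u x ^ 2 ∂μ) * √(∫ x, w x ^ 2 ∂μ)
          + √(∫ x, v x ^ 2 ∂μ) * √(∫ x, w x ^ 2 ∂μ)) := by
        gcongr <;> exact integral_abs_mul_abs_le_sqrt_mul_sqrt ‹_› hw
    _ = C * (√(∫ x, u x ^ 2 ∂μ) + √(∫ x, v x ^ 2 ∂μ)) * √(∫ x, w x ^ 2 ∂μ) := by ring

end CauchySchwarz

theorem remainder_cauchy_schwarz_bound_general
    {Ω 𝒳 : Type*} [MeasurableSpace Ω]
    [MeasurableSpace 𝒳]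
    (P F : Measure Ω) [IsProbabilityMeasure P]
    (m : ℕ)
    (X : Ω → 𝒳) (A : Ω → Fin m)
    (hX : Measurable X)
    (a a' : Fin m) (ε : ℝ) (hε : 0 < ε)
    -- propensity scores under P and F, for b ∈ {a, a'}
    (πP πF : Fin m → 𝒳 → ℝ)
    (hπPmeas : ∀ b ∈ ({a, a'} : Set (Fin m)), Measurable (πP b))
    (hπPrange : ∀ b ∈ ({a, a'} : Set (Fin m)), ∀ x, ε ≤ πP b x ∧ πP b x ≤ 1)
    (hπFmeas : ∀ b ∈ ({a, a'} : Set (Fin m)), Measurable (πF b))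
    (hπFrange : ∀ b ∈ ({a, a'} : Set (Fin m)), ∀ x, ε ≤ πF b x ∧ πF b x ≤ 1)
    -- outcome regressions under P and F
    (μP μF : 𝒳 → ℝ)
    (hμPmeas : Measurable μP) (hμPrange : ∀ x, 0 ≤ μP x ∧ μP x ≤ 1)
    (hμFmeas : Measurable μF) (hμFrange : ∀ x, 0 ≤ μF x ∧ μF x ≤ 1) :
    |∫ ω, πF a (X ω) / (F {ω' | A ω' = a}).toReal
        * (πP a' (X ω) / πF a' (X ω) - πP a (X ω) / πF a (X ω))
        * (μF (X ω) - μP (X ω)) ∂P|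
      ≤ (1 / (ε * (F {ω | A ω = a}).toReal))
        * (Real.sqrt (∫ ω, (πP a' (X ω) - πF a' (X ω)) ^ 2 ∂P)
            + Real.sqrt (∫ ω, (πP a (X ω) - πF a (X ω)) ^ 2 ∂P))
        * Real.sqrt (∫ ω, (μF (X ω) - μP (X ω)) ^ 2 ∂P) := by
  have ha : a ∈ ({a, a'} : Set (Fin m)) := by simp
  have ha' : a' ∈ ({a, a'} : Set (Fin m)) := by simp
  have memLp_comp {φ : 𝒳 → ℝ} {lo : ℝ} (hφ : Measurable φ) (hb : ∀ x, lo ≤ φ x ∧ φ x ≤ 1) :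
      MemLp (fun ω => φ (X ω)) 2 P :=
    memLp_of_bounded (ae_of_all _ fun ω => hb (X ω)) (hφ.comp hX).aestronglyMeasurable 2
  refine abs_integral_le_mul_sqrt_add_sqrt_mul_sqrt (by positivity)
    ((memLp_comp (hπPmeas a' ha') (hπPrange a' ha')).sub
      (memLp_comp (hπFmeas a' ha') (hπFrange a' ha')))
    ((memLp_comp (hπPmeas a ha) (hπPrange a ha)).sub
      (memLp_comp (hπFmeas a ha) (hπFrange a ha)))
    ((memLp_comp hμFmeas hμFrange).sub (memLp_comp hμPmeas hμPrange))
    (ae_of_all _ fun ω => ?_)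
  obtain ⟨hεa, ha1⟩ := hπFrange a ha (X ω)
  exact abs_weighted_div_sub_div_mul_le hε ENNReal.toReal_nonneg ⟨hε.le.trans hεa, ha1⟩
    (hπFrange a ha (X ω)).1 (hπFrange a' ha' (X ω)).1

/-- Cauchy–Schwarz product bound on the leading remainder term: writing
`‖g‖ = (E_P[g(X)²])^{1/2}`, one has
`|E_P[(π_F(a|X)/F(A=a))·(π_P(a'|X)/π_F(a'|X) − π_P(a|X)/π_F(a|X))·(μ_F(X) − μ_P(X))]|`
`≤ (1/(ε·F(A=a)))·(‖π_P(a'|·) − π_F(a'|·)‖ + ‖π_P(a|·) − π_F(a|·)‖)·‖μ_F − μ_P‖`. -/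
theorem remainder_cauchy_schwarz_bound
    {Ω 𝒳 : Type*} [MeasurableSpace Ω] [StandardBorelSpace Ω]
    [MeasurableSpace 𝒳] [StandardBorelSpace 𝒳]
    (P F : Measure Ω) [IsProbabilityMeasure P] [IsProbabilityMeasure F]
    (m : ℕ) (hm : 1 ≤ m)
    (X : Ω → 𝒳) (A : Ω → Fin m) (Y : Ω → ℝ)
    (hX : Measurable X) (hA : Measurable A) (hY : Measurable Y)
    (hY01 : ∀ ω, 0 ≤ Y ω ∧ Y ω ≤ 1)
    (a a' : Fin m) (ε : ℝ) (hε : 0 < ε) (hε1 : ε ≤ 1)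
    (hPa : 0 < P {ω | A ω = a}) (hFa : 0 < F {ω | A ω = a})
    -- propensity scores under P and F, for b ∈ {a, a'}
    (πP πF : Fin m → 𝒳 → ℝ)
    (hπPmeas : ∀ b ∈ ({a, a'} : Set (Fin m)), Measurable (πP b))
    (hπPrange : ∀ b ∈ ({a, a'} : Set (Fin m)), ∀ x, ε ≤ πP b x ∧ πP b x ≤ 1)
    (hπP : ∀ b ∈ ({a, a'} : Set (Fin m)), (fun ω => πP b (X ω)) =ᵐ[P]
      P[fun ω => (if A ω = b then (1 : ℝ) else 0) | MeasurableSpace.comap X inferInstance])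
    (hπFmeas : ∀ b ∈ ({a, a'} : Set (Fin m)), Measurable (πF b))
    (hπFrange : ∀ b ∈ ({a, a'} : Set (Fin m)), ∀ x, ε ≤ πF b x ∧ πF b x ≤ 1)
    (hπF : ∀ b ∈ ({a, a'} : Set (Fin m)), (fun ω => πF b (X ω)) =ᵐ[F]
      F[fun ω => (if A ω = b then (1 : ℝ) else 0) | MeasurableSpace.comap X inferInstance])
    -- outcome regressions under P and F
    (μP μF : 𝒳 → ℝ)
    (hμPmeas : Measurable μP) (hμPrange : ∀ x, 0 ≤ μP x ∧ μP x ≤ 1)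
    (hμP : (fun ω => μP (X ω) * πP a' (X ω)) =ᵐ[P]
      P[fun ω => (if A ω = a' then (1 : ℝ) else 0) * Y ω | MeasurableSpace.comap X inferInstance])
    (hμFmeas : Measurable μF) (hμFrange : ∀ x, 0 ≤ μF x ∧ μF x ≤ 1)
    (hμF : (fun ω => μF (X ω) * πF a' (X ω)) =ᵐ[F]
      F[fun ω => (if A ω = a' then (1 : ℝ) else 0) * Y ω | MeasurableSpace.comap X inferInstance]) :
    |∫ ω, πF a (X ω) / (F {ω' | A ω' = a}).toReal
        * (πP a' (X ω) / πF a' (X ω) - πP a (X ω) / πF a (X ω))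
        * (μF (X ω) - μP (X ω)) ∂P|
      ≤ (1 / (ε * (F {ω | A ω = a}).toReal))
        * (Real.sqrt (∫ ω, (πP a' (X ω) - πF a' (X ω)) ^ 2 ∂P)
            + Real.sqrt (∫ ω, (πP a (X ω) - πF a (X ω)) ^ 2 ∂P))
        * Real.sqrt (∫ ω, (μF (X ω) - μP (X ω)) ^ 2 ∂P) :=
  remainder_cauchy_schwarz_bound_general P F m X A hX a a' ε hε πP πF hπPmeas hπPrange hπFmeas
    hπFrange μP μF hμPmeas hμPrange hμFmeas hμFrange
end
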